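/- arXiv:2506.15149 — 7 statements merged into one kernel-verified Lean document; each statement's English description precedes it below -/
import Mathlib

section
/- Let x = (x₁,x₂,x₃) ∈ 𝔼 (so that |x₃| < 1). Set β₁ = (x₁ − conj(x₂)·x₃)/(1 − |x₃|²), β₂ = (x₂ − conj(x₁)·x₃)/(1 − |x₃|²), z₁(x) = 2·conj(β₁) / (1 + |β₁|² − |β₂|² + √((1 + |β₁|² − |β₂|²)² − 4|β₁|²)) and z₂(x) = 2·conj(β₂) / (1 + |β₂|² − |β₁|² + √((1 + |β₂|² − |β₁|²)² − 4|β₂|²)). Then (z₁(x), z₂(x)) ∈ 𝔻 × 𝔻, and the function g(z₁,z₂) = √((1−|z₁|²)(1−|z₂|²)) / |1 − x₁z₁ − x₂z₂ + x₃z₁z₂| on 𝔻̄ × 𝔻̄ attains its supremum at (z₁(x), z₂(x)); moreover this maximizer is unique: g(z₁,z₂) < g(z₁(x), z₂(x)) for every (z₁,z₂) ∈ 𝔻̄ × 𝔻̄ with (z₁,z₂) ≠ (z₁(x), z₂(x)). -/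
noncomputable section

open Complex

/-- The expression `1 - x₁ z₁ - x₂ z₂ + x₃ z₁ z₂`. -/
def hexDen (x : ℂ × ℂ × ℂ) (z₁ z₂ : ℂ) : ℂ :=
  1 - x.1 * z₁ - x.2.1 * z₂ + x.2.2 * z₁ * z₂

/-- The tetrablock `𝔼 ⊆ ℂ³`. -/
def tetrablock : Set (ℂ × ℂ × ℂ) :=
  {x | ∀ z₁ z₂ : ℂ, ‖z₁‖ ≤ 1 → ‖z₂‖ ≤ 1 → hexDen x z₁ z₂ ≠ 0}

/-- The distinguished boundary `b𝔼` of the tetrablock. -/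
def bE : Set (ℂ × ℂ × ℂ) :=
  {x | x.1 = (starRingEnd ℂ) x.2.1 * x.2.2 ∧ ‖x.2.2‖ = 1 ∧ ‖x.2.1‖ ≤ 1}

/-- The linear fractional map `ψ_{z₁,z₂}(a, x₁, x₂, x₃)`. -/
def psi (z₁ z₂ : ℂ) (q : ℂ × ℂ × ℂ × ℂ) : ℂ :=
  q.1 * ((Real.sqrt ((1 - ‖z₁‖ ^ 2) * (1 - ‖z₂‖ ^ 2)) : ℝ) : ℂ) / hexDen q.2 z₁ z₂

/-- `sup_{z₁,z₂ ∈ 𝔻} |ψ_{z₁,z₂}(q)|`. -/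
def supPsi (q : ℂ × ℂ × ℂ × ℂ) : ℝ :=
  sSup {r : ℝ | ∃ z₁ z₂ : ℂ, ‖z₁‖ < 1 ∧ ‖z₂‖ < 1 ∧ r = ‖psi z₁ z₂ q‖}

/-- The function `K_*` on the tetrablock. -/
def Kstar (x : ℂ × ℂ × ℂ) : ℝ :=
  sSup {r : ℝ | ∃ z₁ z₂ : ℂ, ‖z₁‖ < 1 ∧ ‖z₂‖ < 1 ∧
    r = Real.sqrt ((1 - ‖z₁‖ ^ 2) * (1 - ‖z₂‖ ^ 2)) / ‖hexDen x z₁ z₂‖}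

/-- The hexablock `ℍ ⊆ ℂ⁴`. -/
def hexablock : Set (ℂ × ℂ × ℂ × ℂ) :=
  {q | q.2 ∈ tetrablock ∧ supPsi q < 1}

/-- Operator norm of a `2 × 2` complex matrix acting on Euclidean `ℂ²`. -/
def opNorm2 (A : Matrix (Fin 2) (Fin 2) ℂ) : ℝ :=
  ‖Matrix.toEuclideanCLM (𝕜 := ℂ) A‖

/-- `π(A) = (a₂₁, a₁₁, a₂₂, det A)`. -/
def piMap (A : Matrix (Fin 2) (Fin 2) ℂ) : ℂ × ℂ × ℂ × ℂ :=
  (A 1 0, A 0 0, A 1 1, A.det)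

/-- The structured singular value `μ_hexa`, valued in `[0, ∞]`;
the infimum over the empty set is `∞`, whose inverse is `0`. -/
def muHexa (A : Matrix (Fin 2) (Fin 2) ℂ) : ENNReal :=
  (sInf {r : ENNReal | ∃ X : Matrix (Fin 2) (Fin 2) ℂ,
      X 1 0 = 0 ∧ (1 - A * X).det = 0 ∧ r = ENNReal.ofReal (opNorm2 X)})⁻¹

/-- The μ-hexablock `ℍ_μ`. -/
def hexMu : Set (ℂ × ℂ × ℂ × ℂ) :=
  {q | ∃ A : Matrix (Fin 2) (Fin 2) ℂ, muHexa A < 1 ∧ piMap A = q}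

/-- The normed hexablock `ℍ_N`. -/
def hexN : Set (ℂ × ℂ × ℂ × ℂ) :=
  {q | ∃ A : Matrix (Fin 2) (Fin 2) ℂ, opNorm2 A < 1 ∧ piMap A = q}

/-- `ℍ_p = π(𝒰(2))`. -/
def hexP : Set (ℂ × ℂ × ℂ × ℂ) :=
  {q | ∃ U : Matrix (Fin 2) (Fin 2) ℂ, U ∈ Matrix.unitaryGroup (Fin 2) ℂ ∧ piMap U = q}

/-- Evaluation of a polynomial in four variables at a point of `ℂ⁴`. -/
def evalPoly4 (p : MvPolynomial (Fin 4) ℂ) (q : ℂ × ℂ × ℂ × ℂ) : ℂ :=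
  MvPolynomial.eval ![q.1, q.2.1, q.2.2.1, q.2.2.2] p

/-- Polynomial convexity of a subset of `ℂ⁴`. -/
def PolyConvex (K : Set (ℂ × ℂ × ℂ × ℂ)) : Prop :=
  ∀ z ∉ K, ∃ p : MvPolynomial (Fin 4) ℂ,
    (∀ w ∈ K, ‖evalPoly4 p w‖ ≤ 1) ∧ 1 < ‖evalPoly4 p z‖

/-- Polynomial convex hull of a subset of `ℂ⁴`. -/
def polyHull (K : Set (ℂ × ℂ × ℂ × ℂ)) : Set (ℂ × ℂ × ℂ × ℂ) :=
  {z | ∀ p : MvPolynomial (Fin 4) ℂ,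
    ‖evalPoly4 p z‖ ≤ sSup {r : ℝ | ∃ w ∈ K, r = ‖evalPoly4 p w‖}}

/-- The pentablock `𝒫 ⊆ ℂ³`. -/
def pentablock : Set (ℂ × ℂ × ℂ) :=
  {q | ∃ A : Matrix (Fin 2) (Fin 2) ℂ, opNorm2 A < 1 ∧ (A 1 0, A 0 0 + A 1 1, A.det) = q}

/-!
Write `hexDen x w₁ w₂ = a - b w₁` with `a = 1 - x₂ w₂` and `b = x₁ - x₃ w₂`. Then
`|a - b w₁|² = (|a|² - |b|²)(1 - |w₁|²) + |ā w₁ - b̄|²`, and `|a|² - |b|²` is the real quadratic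
`α - 2 Re(c w₂) + γ |w₂|²` in `w₂`, where `α = 1 - |x₁|²`, `γ = |x₂|² - |x₃|²`, `c = x₂ - x̄₁ x₃`;
it is positive on the closed disc because `x ∈ 𝔼`.
Completing the square, it equals `m (1 - |w₂|²) + k |w₂ - z₂|²`, where `k > 0` is the larger root of
`k² - (α + γ) k + |c|² = 0` and `m = k - γ`. Hence `|hexDen|² ≥ m (1 - |w₁|²)(1 - |w₂|²)` on the
closed bidisc, with equality attained at some `(w₁, z₂)` and only at points with second coordinate
`z₂`. So every maximizer of `g` has second coordinate `z₂`, and by the symmetry `x₁ ↔ x₂`,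
`w₁ ↔ w₂` first coordinate `z₁`.
-/

open ComplexConjugate

lemma norm_sub_mul_sq (a b w : ℂ) :
    ‖a - b * w‖ ^ 2 = (‖a‖ ^ 2 - ‖b‖ ^ 2) * (1 - ‖w‖ ^ 2) + ‖conj a * w - conj b‖ ^ 2 := by
  simp only [Complex.sq_norm, normSq_apply, sub_re, sub_im, mul_re, mul_im, conj_re, conj_im]
  ring

lemma norm_one_sub_mul_sq_sub_norm_sub_mul_sq (x₁ x₂ x₃ w : ℂ) :
    ‖1 - x₂ * w‖ ^ 2 - ‖x₁ - x₃ * w‖ ^ 2 =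
      (1 - ‖x₁‖ ^ 2) - 2 * ((x₂ - conj x₁ * x₃) * w).re + (‖x₂‖ ^ 2 - ‖x₃‖ ^ 2) * ‖w‖ ^ 2 := by
  simp only [Complex.sq_norm, normSq_apply, sub_re, sub_im, mul_re, mul_im, conj_re, conj_im,
    one_re, one_im]
  ring

lemma norm_sub_conj_mul_sq_sub (x₁ x₂ x₃ : ℂ) :
    ‖x₂ - conj x₁ * x₃‖ ^ 2 - ‖x₁ - conj x₂ * x₃‖ ^ 2 =
      (‖x₂‖ ^ 2 - ‖x₁‖ ^ 2) * (1 - ‖x₃‖ ^ 2) := by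
  simp only [Complex.sq_norm, normSq_apply, sub_re, sub_im, mul_re, mul_im, conj_re, conj_im]
  ring

lemma quad_eq_mul_add_mul_norm_sub_sq {α γ k : ℝ} {c : ℂ} (hk₀ : k ≠ 0)
    (hk : k * (α + γ - k) = ‖c‖ ^ 2) (w : ℂ) :
    α - 2 * (c * w).re + γ * ‖w‖ ^ 2 =
      (k - γ) * (1 - ‖w‖ ^ 2) + k * ‖w - conj c / k‖ ^ 2 := by
  rw [Complex.sq_norm, normSq_apply] at hk
  simp only [Complex.sq_norm, normSq_apply, sub_re, sub_im, mul_re, div_ofReal_re,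
    div_ofReal_im, conj_re, conj_im]
  field_simp
  linear_combination hk

def largerRoot (σ b : ℝ) : ℝ := (σ + √(σ ^ 2 - 4 * b)) / 2

lemma largerRoot_mul_sub {σ b : ℝ} (h : 4 * b ≤ σ ^ 2) :
    largerRoot σ b * (σ - largerRoot σ b) = b := by
  have := Real.sq_sqrt (sub_nonneg.2 h)
  unfold largerRoot
  linear_combination (-1 / 4 : ℝ) * this

lemma half_le_largerRoot (σ b : ℝ) : σ / 2 ≤ largerRoot σ b := by
  unfold largerRoot
  linarith [Real.sqrt_nonneg (σ ^ 2 - 4 * b)]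

lemma largerRoot_pos {σ b : ℝ} (hσ : 0 < σ) : 0 < largerRoot σ b := by
  linarith [half_le_largerRoot σ b]

lemma largerRoot_div {σ b ρ : ℝ} (hρ : 0 < ρ) :
    largerRoot (σ / ρ) (b / ρ ^ 2) = largerRoot σ b / ρ := by
  unfold largerRoot
  rw [show (σ / ρ) ^ 2 - 4 * (b / ρ ^ 2) = (σ ^ 2 - 4 * b) / ρ ^ 2 by field_simp,
    Real.sqrt_div' _ (by positivity), Real.sqrt_sq hρ.le]
  ring

lemma norm_conj_div_largerRoot_lt_one {c : ℂ} {σ : ℝ} (h : 2 * ‖c‖ < σ) :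
    ‖conj c / largerRoot σ (‖c‖ ^ 2)‖ < 1 := by
  have hk := half_le_largerRoot σ (‖c‖ ^ 2)
  have hk₀ : 0 < largerRoot σ (‖c‖ ^ 2) := by linarith [norm_nonneg c]
  rw [norm_div, Complex.norm_conj, Complex.norm_real, Real.norm_of_nonneg hk₀.le, div_lt_one hk₀]
  linarith

lemma sqrt_div_le_inv_sqrt_iff {P d m : ℝ} (hm : 0 < m) (hd : 0 < d) :
    √P / d ≤ (√m)⁻¹ ↔ m * P ≤ d ^ 2 := by
  rw [div_le_iff₀ hd, ← div_eq_inv_mul, le_div_iff₀ (Real.sqrt_pos.2 hm),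
    ← Real.sqrt_mul' _ hm.le, Real.sqrt_le_left hd.le, mul_comm]

lemma inv_sqrt_le_sqrt_div_iff {P d m : ℝ} (hm : 0 < m) (hd : 0 < d) :
    (√m)⁻¹ ≤ √P / d ↔ d ^ 2 ≤ m * P := by
  rw [le_div_iff₀ hd, ← div_eq_inv_mul, div_le_iff₀ (Real.sqrt_pos.2 hm),
    ← Real.sqrt_mul' _ hm.le, Real.le_sqrt' hd, mul_comm]

section Tetrablock

variable {x₁ x₂ x₃ : ℂ}

lemma hexDen_eq_sub_mul (x₁ x₂ x₃ w₁ w₂ : ℂ) :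
    hexDen (x₁, x₂, x₃) w₁ w₂ = (1 - x₂ * w₂) - (x₁ - x₃ * w₂) * w₁ := by
  simp only [hexDen]
  ring

lemma hexDen_swap (x₁ x₂ x₃ w₁ w₂ : ℂ) :
    hexDen (x₂, x₁, x₃) w₂ w₁ = hexDen (x₁, x₂, x₃) w₁ w₂ := by
  simp only [hexDen]
  ring

lemma tetrablock_swap (hx : (x₁, x₂, x₃) ∈ tetrablock) : (x₂, x₁, x₃) ∈ tetrablock := by
  intro u v hu hv
  rw [hexDen_swap]
  exact hx v u hv hu

lemma norm_sub_mul_lt_of_mem_tetrablock (hx : (x₁, x₂, x₃) ∈ tetrablock) {w : ℂ}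
    (hw : ‖w‖ ≤ 1) : ‖x₁ - x₃ * w‖ < ‖1 - x₂ * w‖ := by
  have ha : 1 - x₂ * w ≠ 0 := by
    simpa [hexDen_eq_sub_mul] using hx 0 w (by simp) hw
  by_contra! h
  have hb : x₁ - x₃ * w ≠ 0 := norm_pos_iff.1 ((norm_pos_iff.2 ha).trans_le h)
  refine hx ((1 - x₂ * w) / (x₁ - x₃ * w)) w ?_ hw ?_
  · rw [norm_div]
    exact div_le_one_of_le₀ h (norm_nonneg _)
  · rw [hexDen_eq_sub_mul, mul_div_cancel₀ _ hb, sub_self]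

lemma two_mul_norm_lt_of_mem_tetrablock (hx : (x₁, x₂, x₃) ∈ tetrablock) :
    2 * ‖x₂ - conj x₁ * x₃‖ < (1 - ‖x₁‖ ^ 2) + (‖x₂‖ ^ 2 - ‖x₃‖ ^ 2) := by
  set c := x₂ - conj x₁ * x₃
  set w := cexp (↑(-c.arg) * I)
  have hw : ‖w‖ = 1 := norm_exp_ofReal_mul_I _
  have hcw : (c * w).re = ‖c‖ := by
    conv_lhs => rw [← norm_mul_exp_arg_mul_I c]
    rw [mul_assoc, ← Complex.exp_add]
    simp
  have hlt := norm_sub_mul_lt_of_mem_tetrablock hx hw.le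
  have hq := norm_one_sub_mul_sq_sub_norm_sub_mul_sq x₁ x₂ x₃ w
  rw [hcw, hw] at hq
  nlinarith [pow_lt_pow_left₀ hlt (norm_nonneg _) two_ne_zero]

lemma norm_sq_lt_one_of_mem_tetrablock (hx : (x₁, x₂, x₃) ∈ tetrablock) : ‖x₃‖ ^ 2 < 1 := by
  have h₁ := two_mul_norm_lt_of_mem_tetrablock hx
  have h₂ := two_mul_norm_lt_of_mem_tetrablock (tetrablock_swap hx)
  linarith [norm_nonneg (x₂ - conj x₁ * x₃), norm_nonneg (x₁ - conj x₂ * x₃)]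

lemma exists_norm_lt_one_conj_mul_sub_conj_eq_zero (hx : (x₁, x₂, x₃) ∈ tetrablock) {w₂ : ℂ}
    (hw₂ : ‖w₂‖ ≤ 1) : ∃ w₁ : ℂ, ‖w₁‖ < 1 ∧ conj (1 - x₂ * w₂) * w₁ - conj (x₁ - x₃ * w₂) = 0 := by
  have hab := norm_sub_mul_lt_of_mem_tetrablock hx hw₂
  have ha : 1 - x₂ * w₂ ≠ 0 := norm_pos_iff.1 ((norm_nonneg _).trans_lt hab)
  refine ⟨conj ((x₁ - x₃ * w₂) / (1 - x₂ * w₂)), ?_, ?_⟩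
  · rwa [Complex.norm_conj, norm_div, div_lt_one (norm_pos_iff.2 ha)]
  · rw [← map_mul, mul_div_cancel₀ _ ha, sub_self]

/-- The paper's `z₂(x)` with numerator and denominator multiplied by `1 - |x₃|²`
(see `maximizerSnd_eq`). -/
def maximizerSnd (x₁ x₂ x₃ : ℂ) : ℂ :=
  conj (x₂ - conj x₁ * x₃) /
    largerRoot ((1 - ‖x₁‖ ^ 2) + (‖x₂‖ ^ 2 - ‖x₃‖ ^ 2)) (‖x₂ - conj x₁ * x₃‖ ^ 2)

lemma norm_maximizerSnd_lt_one (hx : (x₁, x₂, x₃) ∈ tetrablock) :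
    ‖maximizerSnd x₁ x₂ x₃‖ < 1 :=
  norm_conj_div_largerRoot_lt_one (two_mul_norm_lt_of_mem_tetrablock hx)

lemma exists_norm_hexDen_sq_eq (hx : (x₁, x₂, x₃) ∈ tetrablock) :
    ∃ m k : ℝ, 0 < k ∧ ∀ w₁ w₂ : ℂ, ‖hexDen (x₁, x₂, x₃) w₁ w₂‖ ^ 2 =
      m * ((1 - ‖w₁‖ ^ 2) * (1 - ‖w₂‖ ^ 2)) +
        k * ‖w₂ - maximizerSnd x₁ x₂ x₃‖ ^ 2 * (1 - ‖w₁‖ ^ 2) +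
          ‖conj (1 - x₂ * w₂) * w₁ - conj (x₁ - x₃ * w₂)‖ ^ 2 := by
  have hc := two_mul_norm_lt_of_mem_tetrablock hx
  set c := x₂ - conj x₁ * x₃
  set σ := (1 - ‖x₁‖ ^ 2) + (‖x₂‖ ^ 2 - ‖x₃‖ ^ 2)
  set k := largerRoot σ (‖c‖ ^ 2)
  have hk : 0 < k := largerRoot_pos (by linarith [norm_nonneg c])
  have hroot : k * (σ - k) = ‖c‖ ^ 2 :=
    largerRoot_mul_sub (by nlinarith [norm_nonneg c])
  refine ⟨k - (‖x₂‖ ^ 2 - ‖x₃‖ ^ 2), k, hk, fun w₁ w₂ => ?_⟩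
  have hq : ‖1 - x₂ * w₂‖ ^ 2 - ‖x₁ - x₃ * w₂‖ ^ 2 =
      (k - (‖x₂‖ ^ 2 - ‖x₃‖ ^ 2)) * (1 - ‖w₂‖ ^ 2) + k * ‖w₂ - maximizerSnd x₁ x₂ x₃‖ ^ 2 :=
    (norm_one_sub_mul_sq_sub_norm_sub_mul_sq x₁ x₂ x₃ w₂).trans
      (quad_eq_mul_add_mul_norm_sub_sq hk.ne' hroot w₂)
  rw [hexDen_eq_sub_mul, norm_sub_mul_sq, hq]
  ring

lemma exists_mul_le_norm_hexDen_sq (hx : (x₁, x₂, x₃) ∈ tetrablock) :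
    ∃ m > 0,
      (∀ w₁ w₂ : ℂ, ‖w₁‖ ≤ 1 → ‖w₂‖ ≤ 1 →
        m * ((1 - ‖w₁‖ ^ 2) * (1 - ‖w₂‖ ^ 2)) ≤ ‖hexDen (x₁, x₂, x₃) w₁ w₂‖ ^ 2) ∧
      (∃ w₁ : ℂ, ‖w₁‖ < 1 ∧ ‖hexDen (x₁, x₂, x₃) w₁ (maximizerSnd x₁ x₂ x₃)‖ ^ 2 =
        m * ((1 - ‖w₁‖ ^ 2) * (1 - ‖maximizerSnd x₁ x₂ x₃‖ ^ 2))) ∧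
      (∀ w₁ w₂ : ℂ, ‖w₁‖ ≤ 1 → ‖w₂‖ ≤ 1 →
        ‖hexDen (x₁, x₂, x₃) w₁ w₂‖ ^ 2 ≤ m * ((1 - ‖w₁‖ ^ 2) * (1 - ‖w₂‖ ^ 2)) →
          w₂ = maximizerSnd x₁ x₂ x₃) := by
  obtain ⟨m, k, hk, hdecomp⟩ := exists_norm_hexDen_sq_eq hx
  set z := maximizerSnd x₁ x₂ x₃
  have hz := norm_maximizerSnd_lt_one hx
  have hD : ∀ w₁ w₂ : ℂ, ‖w₁‖ ≤ 1 → ‖w₂‖ ≤ 1 → 0 < ‖hexDen (x₁, x₂, x₃) w₁ w₂‖ ^ 2 :=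
    fun w₁ w₂ h₁ h₂ => pow_pos (norm_pos_iff.2 (hx w₁ w₂ h₁ h₂)) 2
  have hsq : ∀ w : ℂ, ‖w‖ ≤ 1 → 0 ≤ 1 - ‖w‖ ^ 2 :=
    fun w hw => sub_nonneg.2 (pow_le_one₀ (norm_nonneg w) hw)
  obtain ⟨w₁, hw₁, hw₁z⟩ := exists_norm_lt_one_conj_mul_sub_conj_eq_zero hx hz.le
  have heq : ‖hexDen (x₁, x₂, x₃) w₁ z‖ ^ 2 = m * ((1 - ‖w₁‖ ^ 2) * (1 - ‖z‖ ^ 2)) := by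
    rw [hdecomp, hw₁z, sub_self, norm_zero]
    ring
  have hP : 0 < (1 - ‖w₁‖ ^ 2) * (1 - ‖z‖ ^ 2) :=
    mul_pos (sub_pos.2 (pow_lt_one₀ (norm_nonneg _) hw₁ two_ne_zero))
      (sub_pos.2 (pow_lt_one₀ (norm_nonneg _) hz two_ne_zero))
  have hm : 0 < m := pos_of_mul_pos_left (heq ▸ hD w₁ z hw₁.le hz.le) hP.le
  refine ⟨m, hm, fun w₁ w₂ h₁ h₂ => ?_, ⟨w₁, hw₁, heq⟩, fun w₁ w₂ h₁ h₂ hle => ?_⟩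
  · rw [hdecomp]
    have := mul_nonneg (mul_nonneg hk.le (sq_nonneg ‖w₂ - z‖)) (hsq w₁ h₁)
    nlinarith [sq_nonneg ‖conj (1 - x₂ * w₂) * w₁ - conj (x₁ - x₃ * w₂)‖]
  · have hP₁ : 0 < 1 - ‖w₁‖ ^ 2 :=
      pos_of_mul_pos_left (pos_of_mul_pos_right ((hD w₁ w₂ h₁ h₂).trans_le hle) hm.le)
        (hsq w₂ h₂)
    rw [hdecomp] at hle
    have hprod : k * (1 - ‖w₁‖ ^ 2) * ‖w₂ - z‖ ^ 2 ≤ 0 := by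
      nlinarith [sq_nonneg ‖conj (1 - x₂ * w₂) * w₁ - conj (x₁ - x₃ * w₂)‖]
    rw [← sub_eq_zero, ← norm_eq_zero, ← sq_eq_zero_iff (M₀ := ℝ)]
    exact le_antisymm (nonpos_of_mul_nonpos_right hprod (mul_pos hk hP₁)) (sq_nonneg _)

def closedBidisk : Set (ℂ × ℂ) := {w | ‖w.1‖ ≤ 1 ∧ ‖w.2‖ ≤ 1}

def hexRatio (x : ℂ × ℂ × ℂ) (w : ℂ × ℂ) : ℝ :=
  √((1 - ‖w.1‖ ^ 2) * (1 - ‖w.2‖ ^ 2)) / ‖hexDen x w.1 w.2‖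

lemma hexRatio_swap (x₁ x₂ x₃ : ℂ) (w : ℂ × ℂ) :
    hexRatio (x₂, x₁, x₃) w.swap = hexRatio (x₁, x₂, x₃) w := by
  rw [hexRatio, hexRatio, Prod.fst_swap, Prod.snd_swap, hexDen_swap, mul_comm]

lemma isMaxOn_hexRatio (hx : (x₁, x₂, x₃) ∈ tetrablock) :
    (∃ w₁ : ℂ, (w₁, maximizerSnd x₁ x₂ x₃) ∈ closedBidisk ∧
      IsMaxOn (hexRatio (x₁, x₂, x₃)) closedBidisk (w₁, maximizerSnd x₁ x₂ x₃)) ∧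
    ∀ w ∈ closedBidisk, IsMaxOn (hexRatio (x₁, x₂, x₃)) closedBidisk w →
      w.2 = maximizerSnd x₁ x₂ x₃ := by
  obtain ⟨m, hm, hle, ⟨w₁, hw₁, heq⟩, hsnd⟩ := exists_mul_le_norm_hexDen_sq hx
  have hD : ∀ w ∈ closedBidisk, 0 < ‖hexDen (x₁, x₂, x₃) w.1 w.2‖ :=
    fun w hw => norm_pos_iff.2 (hx _ _ hw.1 hw.2)
  have hbound : ∀ w ∈ closedBidisk, hexRatio (x₁, x₂, x₃) w ≤ (√m)⁻¹ := fun w hw =>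
    (sqrt_div_le_inv_sqrt_iff hm (hD w hw)).2 (hle _ _ hw.1 hw.2)
  have hmem : (w₁, maximizerSnd x₁ x₂ x₃) ∈ closedBidisk :=
    ⟨hw₁.le, (norm_maximizerSnd_lt_one hx).le⟩
  have hval : hexRatio (x₁, x₂, x₃) (w₁, maximizerSnd x₁ x₂ x₃) = (√m)⁻¹ :=
    le_antisymm (hbound _ hmem) ((inv_sqrt_le_sqrt_div_iff hm (hD _ hmem)).2 heq.le)
  refine ⟨⟨w₁, hmem, fun w hw => hval ▸ hbound w hw⟩, fun w hw hmax => ?_⟩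
  exact hsnd _ _ hw.1 hw.2 ((inv_sqrt_le_sqrt_div_iff hm (hD w hw)).1
    (hval.symm.trans_le (isMaxOn_iff.1 hmax _ hmem)))

lemma fst_eq_of_isMaxOn_hexRatio (hx : (x₁, x₂, x₃) ∈ tetrablock) {w : ℂ × ℂ}
    (hw : w ∈ closedBidisk) (hmax : IsMaxOn (hexRatio (x₁, x₂, x₃)) closedBidisk w) :
    w.1 = maximizerSnd x₂ x₁ x₃ := by
  refine (isMaxOn_hexRatio (tetrablock_swap hx)).2 w.swap ⟨hw.2, hw.1⟩ ?_
  have := hmax.comp_mapsTo (t := closedBidisk) (g := Prod.swap) (fun v hv => ⟨hv.2, hv.1⟩)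
    w.swap_swap
  convert this using 1
  funext v
  exact (hexRatio_swap x₂ x₁ x₃ v).symm

lemma maximizerSnd_eq (hx : (x₁, x₂, x₃) ∈ tetrablock) {β₁ β₂ : ℂ}
    (hβ₁ : β₁ = (x₁ - conj x₂ * x₃) / ((1 - ‖x₃‖ ^ 2 : ℝ) : ℂ))
    (hβ₂ : β₂ = (x₂ - conj x₁ * x₃) / ((1 - ‖x₃‖ ^ 2 : ℝ) : ℂ)) :
    2 * conj β₂ / ((1 + ‖β₂‖ ^ 2 - ‖β₁‖ ^ 2 +
        √((1 + ‖β₂‖ ^ 2 - ‖β₁‖ ^ 2) ^ 2 - 4 * ‖β₂‖ ^ 2) : ℝ) : ℂ) =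
      maximizerSnd x₁ x₂ x₃ := by
  set ρ := 1 - ‖x₃‖ ^ 2
  have hρ : 0 < ρ := sub_pos.2 (norm_sq_lt_one_of_mem_tetrablock hx)
  have hnorm : ∀ c : ℂ, ‖c / (ρ : ℂ)‖ ^ 2 = ‖c‖ ^ 2 / ρ ^ 2 := fun c => by
    rw [norm_div, Complex.norm_real, Real.norm_of_nonneg hρ.le, div_pow]
  have hσ : 1 + ‖β₂‖ ^ 2 - ‖β₁‖ ^ 2 = ((1 - ‖x₁‖ ^ 2) + (‖x₂‖ ^ 2 - ‖x₃‖ ^ 2)) / ρ := by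
    have hsw := norm_sub_conj_mul_sq_sub x₁ x₂ x₃
    rw [hβ₁, hβ₂, hnorm, hnorm]
    generalize ‖x₁ - conj x₂ * x₃‖ ^ 2 = b₁ at hsw ⊢
    generalize ‖x₂ - conj x₁ * x₃‖ ^ 2 = b₂ at hsw ⊢
    field_simp
    linear_combination hsw
  have hroot : (1 + ‖β₂‖ ^ 2 - ‖β₁‖ ^ 2 + √((1 + ‖β₂‖ ^ 2 - ‖β₁‖ ^ 2) ^ 2 - 4 * ‖β₂‖ ^ 2)) =
      2 * largerRoot (1 + ‖β₂‖ ^ 2 - ‖β₁‖ ^ 2) (‖β₂‖ ^ 2) := by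
    unfold largerRoot
    ring
  rw [hroot, hσ, hβ₂, hnorm, largerRoot_div hρ, maximizerSnd]
  have hρ' : (ρ : ℂ) ≠ 0 := ofReal_ne_zero.2 hρ.ne'
  rw [map_div₀, conj_ofReal]
  push_cast
  field_simp

end Tetrablock

/-- For `x ∈ 𝔼`, the explicit point `(z₁, z₂)` lies in `𝔻 × 𝔻` and is the
unique maximizer over `𝔻̄ × 𝔻̄` of
`g(w₁, w₂) = √((1-|w₁|²)(1-|w₂|²)) / |1 - x₁w₁ - x₂w₂ + x₃w₁w₂|`. -/
theorem stmt0 (x₁ x₂ x₃ : ℂ) (hx : (x₁, x₂, x₃) ∈ tetrablock)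
    (β₁ β₂ z₁ z₂ : ℂ)
    (hβ₁ : β₁ = (x₁ - (starRingEnd ℂ) x₂ * x₃) / ((1 - ‖x₃‖ ^ 2 : ℝ) : ℂ))
    (hβ₂ : β₂ = (x₂ - (starRingEnd ℂ) x₁ * x₃) / ((1 - ‖x₃‖ ^ 2 : ℝ) : ℂ))
    (hz₁ : z₁ = 2 * (starRingEnd ℂ) β₁ /
      ((1 + ‖β₁‖ ^ 2 - ‖β₂‖ ^ 2 +
        Real.sqrt ((1 + ‖β₁‖ ^ 2 - ‖β₂‖ ^ 2) ^ 2 - 4 * ‖β₁‖ ^ 2) : ℝ) : ℂ))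
    (hz₂ : z₂ = 2 * (starRingEnd ℂ) β₂ /
      ((1 + ‖β₂‖ ^ 2 - ‖β₁‖ ^ 2 +
        Real.sqrt ((1 + ‖β₂‖ ^ 2 - ‖β₁‖ ^ 2) ^ 2 - 4 * ‖β₂‖ ^ 2) : ℝ) : ℂ))
    (g : ℂ → ℂ → ℝ)
    (hg : ∀ w₁ w₂ : ℂ, g w₁ w₂ =
      Real.sqrt ((1 - ‖w₁‖ ^ 2) * (1 - ‖w₂‖ ^ 2)) / ‖hexDen (x₁, x₂, x₃) w₁ w₂‖) :
    ‖z₁‖ < 1 ∧ ‖z₂‖ < 1 ∧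
    (∀ w₁ w₂ : ℂ, ‖w₁‖ ≤ 1 → ‖w₂‖ ≤ 1 → g w₁ w₂ ≤ g z₁ z₂) ∧
    (∀ w₁ w₂ : ℂ, ‖w₁‖ ≤ 1 → ‖w₂‖ ≤ 1 → (w₁, w₂) ≠ (z₁, z₂) → g w₁ w₂ < g z₁ z₂) := by
  have hx' := tetrablock_swap hx
  rw [maximizerSnd_eq hx' hβ₂ hβ₁] at hz₁
  rw [maximizerSnd_eq hx hβ₁ hβ₂] at hz₂
  subst hz₁ hz₂
  obtain rfl : g = fun w₁ w₂ => hexRatio (x₁, x₂, x₃) (w₁, w₂) := funext₂ hg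
  obtain ⟨⟨w, hw, hmax⟩, hsnd⟩ := isMaxOn_hexRatio hx
  have hw₁ : w = maximizerSnd x₂ x₁ x₃ := fst_eq_of_isMaxOn_hexRatio hx hw hmax
  subst hw₁
  refine ⟨norm_maximizerSnd_lt_one hx', norm_maximizerSnd_lt_one hx,
    fun w₁ w₂ h₁ h₂ => isMaxOn_iff.1 hmax _ ⟨h₁, h₂⟩,
    fun w₁ w₂ h₁ h₂ hne => lt_of_not_ge fun hge => hne ?_⟩
  have hmax' : IsMaxOn (hexRatio (x₁, x₂, x₃)) closedBidisk (w₁, w₂) :=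
    fun v hv => le_trans (hmax hv) hge
  exact Prod.ext (fst_eq_of_isMaxOn_hexRatio hx ⟨h₁, h₂⟩ hmax') (hsnd _ ⟨h₁, h₂⟩ hmax')
end
end

section
/- Let (x₁,x₂,x₃) ∈ 𝔼 with x₁x₂ = x₃ (so that |x₁| < 1 and |x₂| < 1). Then sup_{z₁,z₂ ∈ 𝔻} √((1−|z₁|²)(1−|z₂|²)) / |1 − x₁z₁ − x₂z₂ + x₃z₁z₂| = 1/√((1−|x₁|²)(1−|x₂|²)), and this supremum is attained at (z₁,z₂) = (conj(x₁), conj(x₂)). Consequently, for every a ∈ ℂ one has sup_{z₁,z₂ ∈ 𝔻} |ψ_{z₁,z₂}(a,x₁,x₂,x₃)| < 1 if and only if |a| < √((1−|x₁|²)(1−|x₂|²)). -/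
noncomputable section

open Complex

/-! For `x₃ = x₁ x₂` the denominator factors as `(1 - x₁ z₁)(1 - x₂ z₂)`, so the ratio splits
into a product of one-variable ratios `√(1 - |z|²) / |1 - x z|`. The identity
`|1 - x z|² = (1 - |x|²)(1 - |z|²) + |x̄ - z|²` bounds each of them by `1 / √(1 - |x|²)`, with
equality at `z = x̄`. Finally `|ψ_{z₁,z₂}(a, x)|` is `|a|` times the ratio, so
`sup |ψ| = |a| K_*(x)`. -/

lemma norm_lt_one_of_forall_one_sub_mul_ne_zero {x : ℂ}
    (h : ∀ z : ℂ, ‖z‖ ≤ 1 → 1 - x * z ≠ 0) : ‖x‖ < 1 := by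
  by_contra! hx
  have hx0 : x ≠ 0 := norm_pos_iff.1 (one_pos.trans_le hx)
  exact h x⁻¹ (by rw [norm_inv]; exact inv_le_one_of_one_le₀ hx)
    (by rw [mul_inv_cancel₀ hx0, sub_self])

lemma norm_fst_lt_one_of_mem_tetrablock {x : ℂ × ℂ × ℂ} (hx : x ∈ tetrablock) : ‖x.1‖ < 1 :=
  norm_lt_one_of_forall_one_sub_mul_ne_zero fun z hz ↦ by
    simpa [hexDen] using hx z 0 hz (by simp)

lemma norm_snd_lt_one_of_mem_tetrablock {x : ℂ × ℂ × ℂ} (hx : x ∈ tetrablock) : ‖x.2.1‖ < 1 :=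
  norm_lt_one_of_forall_one_sub_mul_ne_zero fun z hz ↦ by
    simpa [hexDen] using hx 0 z (by simp) hz

lemma hexDen_eq_mul_of_mul_eq {x₁ x₂ x₃ : ℂ} (h : x₁ * x₂ = x₃) (z₁ z₂ : ℂ) :
    hexDen (x₁, x₂, x₃) z₁ z₂ = (1 - x₁ * z₁) * (1 - x₂ * z₂) := by
  simp only [hexDen, ← h]
  ring

lemma norm_one_sub_mul_sq (x z : ℂ) :
    ‖1 - x * z‖ ^ 2 = (1 - ‖x‖ ^ 2) * (1 - ‖z‖ ^ 2) + ‖starRingEnd ℂ x - z‖ ^ 2 := by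
  simp only [Complex.sq_norm, Complex.normSq_apply, Complex.sub_re, Complex.sub_im,
    Complex.mul_re, Complex.mul_im, Complex.one_re, Complex.one_im, Complex.conj_re,
    Complex.conj_im]
  ring

lemma sqrt_one_sub_sq_div_norm_one_sub_mul_le {x : ℂ} (hx : ‖x‖ < 1) (z : ℂ) :
    √(1 - ‖z‖ ^ 2) / ‖1 - x * z‖ ≤ 1 / √(1 - ‖x‖ ^ 2) := by
  have hx' : 0 < 1 - ‖x‖ ^ 2 := by nlinarith [norm_nonneg x]
  rcases (norm_nonneg (1 - x * z)).eq_or_lt with h0 | hpos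
  · rw [← h0, div_zero]
    positivity
  rw [div_le_div_iff₀ hpos (Real.sqrt_pos.2 hx'), one_mul, mul_comm, ← Real.sqrt_mul hx'.le,
    ← Real.sqrt_sq hpos.le]
  exact Real.sqrt_le_sqrt <| by
    rw [norm_one_sub_mul_sq]
    exact le_add_of_nonneg_right (sq_nonneg _)

lemma sqrt_one_sub_sq_div_norm_one_sub_mul_conj (x : ℂ) :
    √(1 - ‖starRingEnd ℂ x‖ ^ 2) / ‖1 - x * starRingEnd ℂ x‖ = 1 / √(1 - ‖x‖ ^ 2) := by
  have h : 1 - x * starRingEnd ℂ x = ((1 - ‖x‖ ^ 2 : ℝ) : ℂ) := by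
    rw [Complex.mul_conj, Complex.normSq_eq_norm_sq]
    push_cast
    ring
  rw [h, Complex.norm_real, Real.norm_eq_abs, RCLike.norm_conj]
  rcases le_or_gt 0 (1 - ‖x‖ ^ 2) with hnn | hneg
  · rw [abs_of_nonneg hnn, Real.sqrt_div_self']
  · rw [Real.sqrt_eq_zero_of_nonpos hneg.le, zero_div, div_zero]

lemma sqrt_div_norm_hexDen_eq_mul {x₁ x₂ x₃ : ℂ} (h : x₁ * x₂ = x₃) {z₁ : ℂ} (hz₁ : ‖z₁‖ ≤ 1)
    (z₂ : ℂ) :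
    √((1 - ‖z₁‖ ^ 2) * (1 - ‖z₂‖ ^ 2)) / ‖hexDen (x₁, x₂, x₃) z₁ z₂‖ =
      √(1 - ‖z₁‖ ^ 2) / ‖1 - x₁ * z₁‖ * (√(1 - ‖z₂‖ ^ 2) / ‖1 - x₂ * z₂‖) := by
  have hz₁' : 0 ≤ 1 - ‖z₁‖ ^ 2 := by nlinarith [norm_nonneg z₁]
  rw [hexDen_eq_mul_of_mul_eq h, norm_mul, Real.sqrt_mul hz₁', mul_div_mul_comm]

lemma sqrt_div_norm_hexDen_conj {x₁ x₂ x₃ : ℂ} (h : x₁ * x₂ = x₃) (hx₁ : ‖x₁‖ ≤ 1) :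
    √((1 - ‖starRingEnd ℂ x₁‖ ^ 2) * (1 - ‖starRingEnd ℂ x₂‖ ^ 2)) /
        ‖hexDen (x₁, x₂, x₃) (starRingEnd ℂ x₁) (starRingEnd ℂ x₂)‖ =
      1 / √((1 - ‖x₁‖ ^ 2) * (1 - ‖x₂‖ ^ 2)) := by
  have hx₁' : 0 ≤ 1 - ‖x₁‖ ^ 2 := by nlinarith [norm_nonneg x₁]
  rw [sqrt_div_norm_hexDen_eq_mul h (by rwa [RCLike.norm_conj]),
    sqrt_one_sub_sq_div_norm_one_sub_mul_conj, sqrt_one_sub_sq_div_norm_one_sub_mul_conj,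
    Real.sqrt_mul hx₁', one_div_mul_one_div]

lemma isGreatest_sqrt_div_norm_hexDen {x₁ x₂ x₃ : ℂ} (h : x₁ * x₂ = x₃)
    (hx₁ : ‖x₁‖ < 1) (hx₂ : ‖x₂‖ < 1) :
    IsGreatest {r : ℝ | ∃ z₁ z₂ : ℂ, ‖z₁‖ < 1 ∧ ‖z₂‖ < 1 ∧
        r = √((1 - ‖z₁‖ ^ 2) * (1 - ‖z₂‖ ^ 2)) / ‖hexDen (x₁, x₂, x₃) z₁ z₂‖}
      (1 / √((1 - ‖x₁‖ ^ 2) * (1 - ‖x₂‖ ^ 2))) := by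
  refine ⟨⟨starRingEnd ℂ x₁, starRingEnd ℂ x₂, by rwa [RCLike.norm_conj],
    by rwa [RCLike.norm_conj], (sqrt_div_norm_hexDen_conj h hx₁.le).symm⟩, ?_⟩
  rintro r ⟨z₁, z₂, hz₁, -, rfl⟩
  have hx₁' : 0 ≤ 1 - ‖x₁‖ ^ 2 := by nlinarith [norm_nonneg x₁]
  rw [sqrt_div_norm_hexDen_eq_mul h hz₁.le, Real.sqrt_mul hx₁', ← one_div_mul_one_div]
  exact mul_le_mul (sqrt_one_sub_sq_div_norm_one_sub_mul_le hx₁ z₁)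
    (sqrt_one_sub_sq_div_norm_one_sub_mul_le hx₂ z₂) (by positivity) (by positivity)

lemma norm_psi (a : ℂ) (x : ℂ × ℂ × ℂ) (z₁ z₂ : ℂ) :
    ‖psi z₁ z₂ (a, x)‖ = ‖a‖ * (√((1 - ‖z₁‖ ^ 2) * (1 - ‖z₂‖ ^ 2)) / ‖hexDen x z₁ z₂‖) := by
  rw [psi, norm_div, norm_mul, Complex.norm_real, Real.norm_of_nonneg (Real.sqrt_nonneg _),
    mul_div_assoc]

lemma supPsi_eq_norm_mul_Kstar (a : ℂ) (x : ℂ × ℂ × ℂ) : supPsi (a, x) = ‖a‖ * Kstar x := by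
  rw [supPsi, Kstar, ← smul_eq_mul, ← Real.sSup_smul_of_nonneg (norm_nonneg a)]
  congr 1
  ext r
  simp only [Set.mem_smul_set, Set.mem_ofPred_eq, norm_psi, smul_eq_mul]
  constructor
  · rintro ⟨z₁, z₂, hz₁, hz₂, rfl⟩
    exact ⟨_, ⟨z₁, z₂, hz₁, hz₂, rfl⟩, rfl⟩
  · rintro ⟨_, ⟨z₁, z₂, hz₁, hz₂, rfl⟩, rfl⟩
    exact ⟨z₁, z₂, hz₁, hz₂, rfl⟩

/-- For a triangular point of `𝔼`, the supremum of `g` over `𝔻 × 𝔻`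
equals `1/√((1-|x₁|²)(1-|x₂|²))`, is attained at `(conj x₁, conj x₂)`, and
`sup |ψ| < 1` iff `|a| < √((1-|x₁|²)(1-|x₂|²))`. -/
theorem stmt1 (x₁ x₂ x₃ : ℂ) (hx : (x₁, x₂, x₃) ∈ tetrablock) (htri : x₁ * x₂ = x₃) :
    ‖x₁‖ < 1 ∧ ‖x₂‖ < 1 ∧
    sSup {r : ℝ | ∃ z₁ z₂ : ℂ, ‖z₁‖ < 1 ∧ ‖z₂‖ < 1 ∧
        r = Real.sqrt ((1 - ‖z₁‖ ^ 2) * (1 - ‖z₂‖ ^ 2)) / ‖hexDen (x₁, x₂, x₃) z₁ z₂‖}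
      = 1 / Real.sqrt ((1 - ‖x₁‖ ^ 2) * (1 - ‖x₂‖ ^ 2)) ∧
    Real.sqrt ((1 - ‖(starRingEnd ℂ) x₁‖ ^ 2) * (1 - ‖(starRingEnd ℂ) x₂‖ ^ 2)) /
        ‖hexDen (x₁, x₂, x₃) ((starRingEnd ℂ) x₁) ((starRingEnd ℂ) x₂)‖
      = 1 / Real.sqrt ((1 - ‖x₁‖ ^ 2) * (1 - ‖x₂‖ ^ 2)) ∧
    (∀ a : ℂ,
      supPsi (a, x₁, x₂, x₃) < 1 ↔
        ‖a‖ < Real.sqrt ((1 - ‖x₁‖ ^ 2) * (1 - ‖x₂‖ ^ 2))) := by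
  have hx₁ : ‖x₁‖ < 1 := norm_fst_lt_one_of_mem_tetrablock hx
  have hx₂ : ‖x₂‖ < 1 := norm_snd_lt_one_of_mem_tetrablock hx
  have hK : Kstar (x₁, x₂, x₃) = 1 / √((1 - ‖x₁‖ ^ 2) * (1 - ‖x₂‖ ^ 2)) :=
    (isGreatest_sqrt_div_norm_hexDen htri hx₁ hx₂).csSup_eq
  have hP : 0 < √((1 - ‖x₁‖ ^ 2) * (1 - ‖x₂‖ ^ 2)) :=
    Real.sqrt_pos.2 (mul_pos (by nlinarith [norm_nonneg x₁]) (by nlinarith [norm_nonneg x₂]))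
  refine ⟨hx₁, hx₂, hK, sqrt_div_norm_hexDen_conj htri hx₁.le, fun a ↦ ?_⟩
  rw [supPsi_eq_norm_mul_Kstar, hK, mul_one_div, div_lt_one hP]
end
end

section
/- Let (x₁,x₂,x₃) ∈ ℂ³ satisfy x₁ = conj(x₂)·x₃, |x₃| = 1 and |x₁| < 1 (i.e. (x₁,x₂,x₃) ∈ b𝔼 with |x₁| < 1). Then 1 − x₁z₁ − x₂z₂ + x₃z₁z₂ ≠ 0 for all z₁, z₂ ∈ 𝔻, and sup_{z₁,z₂ ∈ 𝔻} √((1−|z₁|²)(1−|z₂|²)) / |1 − x₁z₁ − x₂z₂ + x₃z₁z₂| = 1/√(1−|x₁|²); the supremum is attained at (z₁,z₂) = (conj(x₁), 0). -/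
/-! Since `x₂ = conj x₁ · x₃`, the denominator factors as `(1 - x₁z₁) - x₃z₂(conj x₁ - z₁)`.
With `a = |1 - x₁z₁|`, `b = |conj x₁ - z₁|` and `t = |z₂|`, the Möbius identity
`a² - b² = (1 - |x₁|²)(1 - |z₁|²)` and the identity `(a - tb)² = (a² - b²)(1 - t²) + (at - b)²`
give `|denominator| ≥ a - tb ≥ √(1 - |x₁|²) · √((1 - |z₁|²)(1 - |z₂|²))`, with equality at
`(conj x₁, 0)`. -/

noncomputable section

open Complex

open ComplexConjugate

lemma one_sub_norm_sq_pos {E : Type*} [SeminormedAddGroup E] {z : E} (hz : ‖z‖ < 1) :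
    0 < 1 - ‖z‖ ^ 2 := by
  nlinarith [norm_nonneg z]

lemma eq_conj_mul_of_eq_conj_mul {x₁ x₂ x₃ : ℂ} (h : x₁ = conj x₂ * x₃) (h₃ : ‖x₃‖ = 1) :
    x₂ = conj x₁ * x₃ := by
  have hx₃ : conj x₃ * x₃ = 1 := by
    rw [← normSq_eq_conj_mul_self, ← Complex.sq_norm, h₃]; norm_num
  rw [h, map_mul, conj_conj, mul_assoc, hx₃, mul_one]

lemma hexDen_conj_mul (x₁ x₃ z₁ z₂ : ℂ) :
    hexDen (x₁, conj x₁ * x₃, x₃) z₁ z₂ = (1 - x₁ * z₁) - z₂ * x₃ * (conj x₁ - z₁) := by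
  simp only [hexDen]
  ring

lemma norm_one_sub_mul_sq_sub_norm_conj_sub_sq (x z : ℂ) :
    ‖1 - x * z‖ ^ 2 - ‖conj x - z‖ ^ 2 = (1 - ‖x‖ ^ 2) * (1 - ‖z‖ ^ 2) := by
  simp only [Complex.sq_norm, normSq_apply, sub_re, sub_im, mul_re, mul_im, one_re, one_im,
    conj_re, conj_im]
  ring

lemma sqrt_mul_sqrt_le_sub_mul {a b t : ℝ} (ha : 0 ≤ a) (hb : 0 ≤ b) (ht : t < 1)
    (hab : 0 < a ^ 2 - b ^ 2) :
    √(a ^ 2 - b ^ 2) * √(1 - t ^ 2) ≤ a - t * b := by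
  have hba : b < a := by nlinarith
  have hpos : 0 ≤ a - t * b := by nlinarith
  rw [← Real.sqrt_mul hab.le, ← Real.sqrt_sq hpos]
  exact Real.sqrt_le_sqrt (by nlinarith [sq_nonneg (a * t - b)])

lemma sqrt_mul_sqrt_le_norm_hexDen {x₁ x₃ z₁ z₂ : ℂ} (hx₁ : ‖x₁‖ < 1) (hx₃ : ‖x₃‖ ≤ 1)
    (hz₁ : ‖z₁‖ < 1) (hz₂ : ‖z₂‖ < 1) :
    √(1 - ‖x₁‖ ^ 2) * √((1 - ‖z₁‖ ^ 2) * (1 - ‖z₂‖ ^ 2)) ≤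
      ‖hexDen (x₁, conj x₁ * x₃, x₃) z₁ z₂‖ := by
  have hx₁' := one_sub_norm_sq_pos hx₁
  have hz₁' := one_sub_norm_sq_pos hz₁
  have hmoeb := norm_one_sub_mul_sq_sub_norm_conj_sub_sq x₁ z₁
  calc √(1 - ‖x₁‖ ^ 2) * √((1 - ‖z₁‖ ^ 2) * (1 - ‖z₂‖ ^ 2))
      = √(‖1 - x₁ * z₁‖ ^ 2 - ‖conj x₁ - z₁‖ ^ 2) * √(1 - ‖z₂‖ ^ 2) := by
        rw [hmoeb, Real.sqrt_mul hz₁'.le, Real.sqrt_mul hx₁'.le, mul_assoc]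
    _ ≤ ‖1 - x₁ * z₁‖ - ‖z₂‖ * ‖conj x₁ - z₁‖ :=
        sqrt_mul_sqrt_le_sub_mul (norm_nonneg _) (norm_nonneg _) hz₂
          (hmoeb ▸ mul_pos hx₁' hz₁')
    _ ≤ ‖1 - x₁ * z₁‖ - ‖z₂ * x₃ * (conj x₁ - z₁)‖ := by
        rw [norm_mul, norm_mul]
        gcongr
        exact mul_le_of_le_one_right (norm_nonneg _) hx₃
    _ ≤ ‖hexDen (x₁, conj x₁ * x₃, x₃) z₁ z₂‖ := by
        rw [hexDen_conj_mul]
        exact norm_sub_norm_le _ _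

lemma hexDen_conj_zero (x : ℂ × ℂ × ℂ) : hexDen x (conj x.1) 0 = ((1 - ‖x.1‖ ^ 2 : ℝ) : ℂ) := by
  simp only [hexDen, mul_conj, mul_zero, sub_zero, add_zero, normSq_eq_norm_sq]
  push_cast
  ring

/-- For `(x₁,x₂,x₃) ∈ b𝔼` with `|x₁| < 1`, the denominator is nonzero on
`𝔻 × 𝔻`, the supremum of `g` over `𝔻 × 𝔻` equals `1/√(1-|x₁|²)`, and it is attained at
`(conj x₁, 0)`. -/
theorem stmt2 (x₁ x₂ x₃ : ℂ)
    (h1 : x₁ = (starRingEnd ℂ) x₂ * x₃) (h3 : ‖x₃‖ = 1) (h1' : ‖x₁‖ < 1) :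
    (∀ z₁ z₂ : ℂ, ‖z₁‖ < 1 → ‖z₂‖ < 1 → hexDen (x₁, x₂, x₃) z₁ z₂ ≠ 0) ∧
    sSup {r : ℝ | ∃ z₁ z₂ : ℂ, ‖z₁‖ < 1 ∧ ‖z₂‖ < 1 ∧
        r = Real.sqrt ((1 - ‖z₁‖ ^ 2) * (1 - ‖z₂‖ ^ 2)) / ‖hexDen (x₁, x₂, x₃) z₁ z₂‖}
      = 1 / Real.sqrt (1 - ‖x₁‖ ^ 2) ∧
    Real.sqrt ((1 - ‖(starRingEnd ℂ) x₁‖ ^ 2) * (1 - ‖(0 : ℂ)‖ ^ 2)) /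
        ‖hexDen (x₁, x₂, x₃) ((starRingEnd ℂ) x₁) 0‖
      = 1 / Real.sqrt (1 - ‖x₁‖ ^ 2) := by
  obtain rfl := eq_conj_mul_of_eq_conj_mul h1 h3
  have hx₁ := one_sub_norm_sq_pos h1'
  have hbound : ∀ z₁ z₂ : ℂ, ‖z₁‖ < 1 → ‖z₂‖ < 1 →
      √(1 - ‖x₁‖ ^ 2) * √((1 - ‖z₁‖ ^ 2) * (1 - ‖z₂‖ ^ 2)) ≤
        ‖hexDen (x₁, conj x₁ * x₃, x₃) z₁ z₂‖ :=
    fun _ _ ↦ sqrt_mul_sqrt_le_norm_hexDen h1' h3.le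
  have hpos : ∀ z₁ z₂ : ℂ, ‖z₁‖ < 1 → ‖z₂‖ < 1 → 0 < ‖hexDen (x₁, conj x₁ * x₃, x₃) z₁ z₂‖ :=
    fun z₁ z₂ hz₁ hz₂ ↦ (hbound z₁ z₂ hz₁ hz₂).trans_lt' <| by
      have := one_sub_norm_sq_pos hz₁
      have := one_sub_norm_sq_pos hz₂
      positivity
  have hattained : √((1 - ‖conj x₁‖ ^ 2) * (1 - ‖(0 : ℂ)‖ ^ 2)) /
      ‖hexDen (x₁, conj x₁ * x₃, x₃) (conj x₁) 0‖ = 1 / √(1 - ‖x₁‖ ^ 2) := by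
    rw [hexDen_conj_zero, norm_real, Real.norm_of_nonneg hx₁.le, Complex.norm_conj, norm_zero]
    simpa using Real.sqrt_div_self' (x := 1 - ‖x₁‖ ^ 2)
  refine ⟨fun z₁ z₂ hz₁ hz₂ ↦ norm_pos_iff.mp (hpos z₁ z₂ hz₁ hz₂), ?_, hattained⟩
  refine IsGreatest.csSup_eq ⟨⟨conj x₁, 0, by simpa using h1', by simp, hattained.symm⟩, ?_⟩
  rintro r ⟨z₁, z₂, hz₁, hz₂, rfl⟩
  rw [div_le_div_iff₀ (hpos z₁ z₂ hz₁ hz₂) (Real.sqrt_pos.mpr hx₁), one_mul, mul_comm]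
  exact hbound z₁ z₂ hz₁ hz₂
end
end

section
/- For (a, x₁, x₂, x₃) ∈ ℂ⁴ the following are equivalent: (1) (a, x₁, x₂, x₃) ∈ ℍ_μ; (2) (x₁,x₂,x₃) ∈ 𝔼, |a|·K_*(x₁,x₂,x₃) < 1, and in case a = 0 additionally x₁x₂ = x₃. Consequently ℍ_μ ∩ ({0} × 𝔼) = {(0, x₁, x₂, x₃) ∈ ℍ_μ : x₁x₂ = x₃}. -/
noncomputable section

open Complex

/-
For an upper triangular `X = !![z₁, y; 0, z₂]` one has
`det (1 - A X) = 1 - x₁ z₁ - x₂ z₂ + x₃ z₁ z₂ - a y` with `(a, x₁, x₂, x₃) = π(A)`, and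
`‖X‖ ≤ 1` exactly when `|z₁|, |z₂| ≤ 1` and `|y| ≤ √((1 - |z₁|²)(1 - |z₂|²))`. So no contraction
`X` makes `1 - A X` singular iff `|a| √((1 - |z₁|²)(1 - |z₂|²)) < |1 - x₁ z₁ - x₂ z₂ + x₃ z₁ z₂|`
on the closed bidisc, and by compactness of the bidisc this is the same as `x ∈ 𝔼` and
`|a| K_*(x) < 1`.
Compactness also lets this strict inequality survive replacing `π(A)` by
`(t a, t x₁, t x₂, t² x₃)`, i.e. `X` by `t X`, for some `t > 1`; this is what gives `μ_hexa(A) < 1`.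
Finally `π` reaches every point with `a ≠ 0` or `x₁ x₂ = x₃`, while `a = 0` forces `det A = x₁ x₂`.
-/

open scoped Matrix

theorem nonneg_upperTriangular_contraction_iff {p Q r : ℝ} (hp : 0 ≤ p) (hQ : 0 ≤ Q) (hr : 0 ≤ r) :
    (∀ u w : ℝ, 0 ≤ u → 0 ≤ w → (p * u + Q * w) ^ 2 + r ^ 2 * w ^ 2 ≤ u ^ 2 + w ^ 2) ↔
      p ≤ 1 ∧ r ≤ 1 ∧ Q ^ 2 ≤ (1 - p ^ 2) * (1 - r ^ 2) := by
  constructor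
  · intro h
    have hp1 : p ≤ 1 := by nlinarith [h 1 0 zero_le_one le_rfl]
    have hQr : Q ^ 2 + r ^ 2 ≤ 1 := by nlinarith [h 0 1 le_rfl zero_le_one]
    refine ⟨hp1, by nlinarith, ?_⟩
    rcases hp1.lt_or_eq with hp1 | rfl
    · have hd : 0 < 1 - p ^ 2 := by nlinarith
      -- at `(p Q, 1 - p²)` the form `u² + w² - (p u + Q w)² - r² w²` equals
      -- `(1 - p²) ((1 - p²)(1 - r²) - Q²)`
      nlinarith [h (p * Q) (1 - p ^ 2) (by positivity) hd.le]
    · rcases hQ.lt_or_eq with hQ | rfl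
      · nlinarith [h Q⁻¹ 1 (by positivity) zero_le_one, mul_inv_cancel₀ hQ.ne']
      · simp
  · rintro ⟨hp1, hr1, hQ2⟩ u w hu hw
    rcases hr1.lt_or_eq with hr1 | rfl
    · have hr2 : 0 < 1 - r ^ 2 := by nlinarith
      have hd : 0 ≤ (1 - p ^ 2) * (1 - r ^ 2) - Q ^ 2 := by linarith
      nlinarith [sq_nonneg (p * w * (1 - r ^ 2) - Q * u),
        mul_nonneg hd (add_nonneg (sq_nonneg u) (mul_nonneg hr2.le (sq_nonneg w)))]
    · obtain rfl : Q = 0 := by nlinarith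
      nlinarith [mul_le_one₀ hp1 hp hp1]

theorem opNorm2_le_one_iff (A : Matrix (Fin 2) (Fin 2) ℂ) :
    opNorm2 A ≤ 1 ↔
      ∀ v : Fin 2 → ℂ, ‖(A *ᵥ v) 0‖ ^ 2 + ‖(A *ᵥ v) 1‖ ^ 2 ≤ ‖v 0‖ ^ 2 + ‖v 1‖ ^ 2 := by
  rw [opNorm2, ContinuousLinearMap.opNorm_le_iff zero_le_one,
    (WithLp.equiv 2 (Fin 2 → ℂ)).forall_congr_left]
  refine forall_congr' fun v => ?_
  rw [one_mul, ← pow_le_pow_iff_left₀ (norm_nonneg _) (norm_nonneg _) two_ne_zero]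
  simp [EuclideanSpace.norm_sq_eq, Fin.sum_univ_two]

theorem opNorm2_smul (c : ℂ) (A : Matrix (Fin 2) (Fin 2) ℂ) :
    opNorm2 (c • A) = ‖c‖ * opNorm2 A := by
  simp [opNorm2, map_smul, norm_smul]

def bidiscWeight (z₁ z₂ : ℂ) : ℝ := √((1 - ‖z₁‖ ^ 2) * (1 - ‖z₂‖ ^ 2))

theorem bidiscWeight_nonneg (z₁ z₂ : ℂ) : 0 ≤ bidiscWeight z₁ z₂ := Real.sqrt_nonneg _

theorem one_sub_sq_mul_one_sub_sq_nonneg {z₁ z₂ : ℂ} (h₁ : ‖z₁‖ ≤ 1) (h₂ : ‖z₂‖ ≤ 1) :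
    0 ≤ (1 - ‖z₁‖ ^ 2) * (1 - ‖z₂‖ ^ 2) :=
  mul_nonneg (by nlinarith [norm_nonneg z₁]) (by nlinarith [norm_nonneg z₂])

theorem bidiscWeight_le_one (z₁ : ℂ) {z₂ : ℂ} (h₂ : ‖z₂‖ ≤ 1) :
    bidiscWeight z₁ z₂ ≤ 1 :=
  Real.sqrt_le_one.mpr <| mul_le_one₀ (by nlinarith [norm_nonneg z₁])
    (by nlinarith [norm_nonneg z₂]) (by nlinarith [norm_nonneg z₂])

theorem opNorm2_upperTriangular_le_one_iff (x y z : ℂ) :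
    opNorm2 !![x, y; 0, z] ≤ 1 ↔ ‖x‖ ≤ 1 ∧ ‖z‖ ≤ 1 ∧ ‖y‖ ≤ bidiscWeight x z := by
  have hsq : opNorm2 !![x, y; 0, z] ≤ 1 ↔
      ‖x‖ ≤ 1 ∧ ‖z‖ ≤ 1 ∧ ‖y‖ ^ 2 ≤ (1 - ‖x‖ ^ 2) * (1 - ‖z‖ ^ 2) := by
    rw [← nonneg_upperTriangular_contraction_iff (norm_nonneg x) (norm_nonneg y) (norm_nonneg z),
      opNorm2_le_one_iff]
    have hmulVec : ∀ v : Fin 2 → ℂ, !![x, y; 0, z] *ᵥ v = ![x * v 0 + y * v 1, z * v 1] := by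
      intro v
      ext i
      fin_cases i <;> simp [Matrix.mulVec, dotProduct, Fin.sum_univ_two]
    simp only [hmulVec, Matrix.cons_val_zero, Matrix.cons_val_one]
    constructor
    · intro h u w hu hw
      obtain ⟨c₁, hc₁, hx⟩ := exists_norm_eq_mul_self x
      obtain ⟨c₂, hc₂, hy⟩ := exists_norm_eq_mul_self y
      have hsum : x * (c₁ * u) + y * (c₂ * w) = ((‖x‖ * u + ‖y‖ * w : ℝ) : ℂ) := by
        push_cast
        linear_combination -(u : ℂ) * hx - (w : ℂ) * hy
      have := h ![c₁ * u, c₂ * w]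
      simp only [Matrix.cons_val_zero, Matrix.cons_val_one, hsum] at this
      rw [Complex.norm_real, Real.norm_of_nonneg (by positivity)] at this
      simpa [norm_mul, hc₁, hc₂, abs_of_nonneg, hu, hw, mul_pow] using this
    · intro h v
      have htri : ‖x * v 0 + y * v 1‖ ≤ ‖x‖ * ‖v 0‖ + ‖y‖ * ‖v 1‖ :=
        (norm_add_le _ _).trans_eq (by rw [norm_mul, norm_mul])
      have := h ‖v 0‖ ‖v 1‖ (norm_nonneg _) (norm_nonneg _)
      rw [norm_mul, mul_pow]
      nlinarith [pow_le_pow_left₀ (norm_nonneg _) htri 2]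
  rw [hsq]
  exact and_congr_right fun hx => and_congr_right fun hz =>
    (Real.le_sqrt (norm_nonneg y) (one_sub_sq_mul_one_sub_sq_nonneg hx hz)).symm

theorem continuous_bidiscWeight : Continuous fun z : ℂ × ℂ => bidiscWeight z.1 z.2 := by
  unfold bidiscWeight
  fun_prop

theorem continuous_hexDen (x : ℂ × ℂ × ℂ) : Continuous fun z : ℂ × ℂ => hexDen x z.1 z.2 := by
  unfold hexDen
  fun_prop

theorem isCompact_closedBidisc :
    IsCompact (Metric.closedBall (0 : ℂ) 1 ×ˢ Metric.closedBall (0 : ℂ) 1) :=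
  (isCompact_closedBall _ _).prod (isCompact_closedBall _ _)

theorem exists_pos_le_on_closedBidisc {f : ℂ × ℂ → ℝ} (hf : Continuous f)
    (hpos : ∀ z₁ z₂ : ℂ, ‖z₁‖ ≤ 1 → ‖z₂‖ ≤ 1 → 0 < f (z₁, z₂)) :
    ∃ m > 0, ∀ z₁ z₂ : ℂ, ‖z₁‖ ≤ 1 → ‖z₂‖ ≤ 1 → m ≤ f (z₁, z₂) := by
  obtain ⟨m, hm, hle⟩ := isCompact_closedBidisc.exists_forall_le' hf.continuousOn
    (a := 0) fun z hz => hpos z.1 z.2 (by simpa using hz.1) (by simpa using hz.2)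
  exact ⟨m, hm, fun z₁ z₂ h₁ h₂ => hle (z₁, z₂) (by simpa using And.intro h₁ h₂)⟩

theorem le_Kstar {x : ℂ × ℂ × ℂ} (hx : x ∈ tetrablock) {z₁ z₂ : ℂ} (h₁ : ‖z₁‖ < 1)
    (h₂ : ‖z₂‖ < 1) : bidiscWeight z₁ z₂ / ‖hexDen x z₁ z₂‖ ≤ Kstar x := by
  obtain ⟨m, hm, hle⟩ := exists_pos_le_on_closedBidisc (continuous_hexDen x).norm
    fun z₁ z₂ h₁ h₂ => norm_pos_iff.mpr (hx z₁ z₂ h₁ h₂)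
  refine le_csSup ⟨1 / m, ?_⟩ ⟨z₁, z₂, h₁, h₂, rfl⟩
  rintro _ ⟨w₁, w₂, hw₁, hw₂, rfl⟩
  exact div_le_div₀ zero_le_one (bidiscWeight_le_one w₁ hw₂.le) hm (hle w₁ w₂ hw₁.le hw₂.le)

/-- `|ψ_{z₁,z₂}(q)| < 1` on the closed bidisc, with the denominator cleared. -/
def StrictPsiBound (q : ℂ × ℂ × ℂ × ℂ) : Prop :=
  ∀ z₁ z₂ : ℂ, ‖z₁‖ ≤ 1 → ‖z₂‖ ≤ 1 → ‖q.1‖ * bidiscWeight z₁ z₂ < ‖hexDen q.2 z₁ z₂‖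

theorem strictPsiBound_iff (q : ℂ × ℂ × ℂ × ℂ) :
    StrictPsiBound q ↔ q.2 ∈ tetrablock ∧ ‖q.1‖ * Kstar q.2 < 1 := by
  constructor
  · intro h
    have htet : q.2 ∈ tetrablock := fun z₁ z₂ h₁ h₂ h0 => by
      have := h z₁ z₂ h₁ h₂
      rw [h0, norm_zero] at this
      exact this.not_ge (mul_nonneg (norm_nonneg _) (bidiscWeight_nonneg z₁ z₂))
    obtain ⟨m, hm, hle⟩ := exists_pos_le_on_closedBidisc
      (f := fun z => ‖hexDen q.2 z.1 z.2‖ - ‖q.1‖ * bidiscWeight z.1 z.2)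
      ((continuous_hexDen q.2).norm.sub (continuous_const.mul continuous_bidiscWeight))
      fun z₁ z₂ h₁ h₂ => sub_pos.mpr (h z₁ z₂ h₁ h₂)
    have hK : Kstar q.2 ≤ 1 / (‖q.1‖ + m) := by
      refine Real.sSup_le ?_ (by positivity)
      rintro _ ⟨z₁, z₂, h₁, h₂, rfl⟩
      have hw := bidiscWeight_le_one z₁ h₂.le
      have hmz : m ≤ ‖hexDen q.2 z₁ z₂‖ - ‖q.1‖ * bidiscWeight z₁ z₂ := hle z₁ z₂ h₁.le h₂.le
      rw [div_le_div_iff₀ (norm_pos_iff.mpr (htet z₁ z₂ h₁.le h₂.le)) (by positivity)]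
      change bidiscWeight z₁ z₂ * (‖q.1‖ + m) ≤ 1 * ‖hexDen q.2 z₁ z₂‖
      nlinarith [mul_le_mul_of_nonneg_right hw hm.le]
    refine ⟨htet, ?_⟩
    calc ‖q.1‖ * Kstar q.2 ≤ ‖q.1‖ * (1 / (‖q.1‖ + m)) := by gcongr
      _ < 1 := by rw [mul_one_div, div_lt_one (by positivity)]; linarith
  · rintro ⟨htet, hK⟩ z₁ z₂ h₁ h₂
    have hden : 0 < ‖hexDen q.2 z₁ z₂‖ := norm_pos_iff.mpr (htet z₁ z₂ h₁ h₂)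
    rcases h₁.lt_or_eq with h₁ | h₁
    · rcases h₂.lt_or_eq with h₂ | h₂
      · have := (mul_le_mul_of_nonneg_left (le_Kstar htet h₁ h₂) (norm_nonneg q.1)).trans_lt hK
        rwa [mul_div_assoc', div_lt_one hden] at this
      · simpa [bidiscWeight, h₂] using hden
    · simpa [bidiscWeight, h₁] using hden

def hexDet (q : ℂ × ℂ × ℂ × ℂ) (X : Matrix (Fin 2) (Fin 2) ℂ) : ℂ :=
  hexDen q.2 (X 0 0) (X 1 1) - q.1 * X 0 1

theorem det_one_sub_mul_eq_hexDet (A X : Matrix (Fin 2) (Fin 2) ℂ) (hX : X 1 0 = 0) :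
    (1 - A * X).det = hexDet (piMap A) X := by
  simp [Matrix.det_fin_two, Matrix.mul_apply, Fin.sum_univ_two, hX, hexDet, hexDen, piMap]
  ring

theorem strictPsiBound_iff_hexDet_ne_zero (q : ℂ × ℂ × ℂ × ℂ) :
    StrictPsiBound q ↔
      ∀ X : Matrix (Fin 2) (Fin 2) ℂ, X 1 0 = 0 → opNorm2 X ≤ 1 → hexDet q X ≠ 0 := by
  constructor
  · intro h X hX hnorm hdet
    rw [Matrix.eta_fin_two X, hX, opNorm2_upperTriangular_le_one_iff] at hnorm
    obtain ⟨h₁, h₂, hy⟩ := hnorm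
    have hlt := h _ _ h₁ h₂
    have : ‖hexDen q.2 (X 0 0) (X 1 1)‖ ≤ ‖q.1‖ * ‖X 0 1‖ := by
      rw [← norm_mul, ← sub_eq_zero.mp hdet]
    nlinarith [mul_le_mul_of_nonneg_left hy (norm_nonneg q.1)]
  · intro h
    by_contra hb
    simp only [StrictPsiBound, not_forall, not_lt] at hb
    obtain ⟨z₁, z₂, h₁, h₂, hle⟩ := hb
    obtain ⟨y, hy, hyeq⟩ : ∃ y : ℂ, ‖y‖ ≤ bidiscWeight z₁ z₂ ∧ hexDen q.2 z₁ z₂ = q.1 * y := by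
      rcases eq_or_ne q.1 0 with ha | ha
      · refine ⟨0, by simpa using bidiscWeight_nonneg z₁ z₂, ?_⟩
        simpa [ha] using hle
      · refine ⟨hexDen q.2 z₁ z₂ / q.1, ?_, by field_simp⟩
        rwa [norm_div, div_le_iff₀' (norm_pos_iff.mpr ha)]
    refine h !![z₁, y; 0, z₂] rfl
      ((opNorm2_upperTriangular_le_one_iff _ _ _).mpr ⟨h₁, h₂, hy⟩) ?_
    simp [hexDet, hyeq]

def hexScale (t : ℝ) (q : ℂ × ℂ × ℂ × ℂ) : ℂ × ℂ × ℂ × ℂ :=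
  (t * q.1, t * q.2.1, t * q.2.2.1, t ^ 2 * q.2.2.2)

theorem hexDet_hexScale (t : ℝ) (q : ℂ × ℂ × ℂ × ℂ) (X : Matrix (Fin 2) (Fin 2) ℂ) :
    hexDet (hexScale t q) X = hexDet q ((t : ℂ) • X) := by
  simp only [hexDet, hexDen, hexScale, Matrix.smul_apply, smul_eq_mul]
  ring

open Filter Topology in
theorem StrictPsiBound.eventually_hexScale {q : ℂ × ℂ × ℂ × ℂ} (h : StrictPsiBound q) :
    ∀ᶠ t in 𝓝 (1 : ℝ), StrictPsiBound (hexScale t q) := by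
  set F : ℝ × ℂ × ℂ → ℝ := fun p =>
    ‖hexDen (hexScale p.1 q).2 p.2.1 p.2.2‖ - ‖(hexScale p.1 q).1‖ * bidiscWeight p.2.1 p.2.2
  have hF : Continuous F := by
    have := continuous_bidiscWeight.comp (continuous_snd : Continuous fun p : ℝ × ℂ × ℂ => p.2)
    simp only [F, hexDen, hexScale]
    fun_prop
  have hev := isCompact_closedBidisc.eventually_forall_of_forall_eventually (x₀ := (1 : ℝ))
    (P := fun t z => 0 < F (t, z)) fun z hz =>
      continuousAt_const.eventually_lt hF.continuousAt <| by
        simpa [F, hexScale] using h z.1 z.2 (by simpa using hz.1) (by simpa using hz.2)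
  filter_upwards [hev] with t ht z₁ z₂ h₁ h₂
  exact sub_pos.mp (ht (z₁, z₂) (by simpa using And.intro h₁ h₂))

theorem StrictPsiBound.exists_one_lt_hexDet_ne_zero {q : ℂ × ℂ × ℂ × ℂ} (h : StrictPsiBound q) :
    ∃ t > 1, ∀ X : Matrix (Fin 2) (Fin 2) ℂ, X 1 0 = 0 → opNorm2 X ≤ t → hexDet q X ≠ 0 := by
  obtain ⟨t, ht1, ht⟩ := h.eventually_hexScale.exists_gt
  have ht0 : (t : ℂ) ≠ 0 := by exact_mod_cast (zero_lt_one.trans ht1).ne'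
  refine ⟨t, ht1, fun X hX hnorm => ?_⟩
  have hY : opNorm2 ((t : ℂ)⁻¹ • X) ≤ 1 := by
    rw [opNorm2_smul, norm_inv, Complex.norm_real, Real.norm_of_nonneg (by linarith)]
    exact inv_mul_le_one_of_le₀ hnorm (by linarith)
  have := (strictPsiBound_iff_hexDet_ne_zero _).mp ht _ (by simp [hX]) hY
  rwa [hexDet_hexScale, smul_smul, mul_inv_cancel₀ ht0, one_smul] at this

theorem muHexa_lt_one_iff (A : Matrix (Fin 2) (Fin 2) ℂ) :
    muHexa A < 1 ↔ StrictPsiBound (piMap A) := by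
  rw [muHexa, ENNReal.inv_lt_one]
  constructor
  · intro h
    refine (strictPsiBound_iff_hexDet_ne_zero _).mpr fun X hX hnorm hdet => h.not_ge ?_
    exact sInf_le_of_le ⟨X, hX, by rw [det_one_sub_mul_eq_hexDet A X hX, hdet], rfl⟩
      (ENNReal.ofReal_le_one.mpr hnorm)
  · intro h
    obtain ⟨t, ht1, ht⟩ := h.exists_one_lt_hexDet_ne_zero
    refine (ENNReal.one_lt_ofReal.mpr ht1).trans_le (le_sInf ?_)
    rintro _ ⟨X, hX, hdet, rfl⟩
    refine ENNReal.ofReal_le_ofReal (le_of_not_ge fun hnorm => ht X hX hnorm ?_)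
    rwa [← det_one_sub_mul_eq_hexDet A X hX]

theorem exists_piMap_eq (q : ℂ × ℂ × ℂ × ℂ) (h : q.1 = 0 → q.2.1 * q.2.2.1 = q.2.2.2) :
    ∃ A : Matrix (Fin 2) (Fin 2) ℂ, piMap A = q := by
  obtain ⟨a, x₁, x₂, x₃⟩ := q
  rcases eq_or_ne a 0 with rfl | ha
  · exact ⟨!![x₁, 0; 0, x₂], by simpa [piMap, Matrix.det_fin_two] using h rfl⟩
  · refine ⟨!![x₁, (x₁ * x₂ - x₃) / a; a, x₂], ?_⟩
    simp [piMap, Matrix.det_fin_two, div_mul_cancel₀ _ ha]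

theorem mem_hexMu_iff (q : ℂ × ℂ × ℂ × ℂ) :
    q ∈ hexMu ↔
      q.2 ∈ tetrablock ∧ ‖q.1‖ * Kstar q.2 < 1 ∧ (q.1 = 0 → q.2.1 * q.2.2.1 = q.2.2.2) := by
  rw [← and_assoc, ← strictPsiBound_iff]
  constructor
  · rintro ⟨A, hA, rfl⟩
    refine ⟨(muHexa_lt_one_iff A).mp hA, fun h0 => ?_⟩
    simp [piMap, Matrix.det_fin_two, show A 1 0 = 0 from h0]
  · rintro ⟨hq, h0⟩
    obtain ⟨A, rfl⟩ := exists_piMap_eq q h0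
    exact ⟨A, (muHexa_lt_one_iff A).mpr hq, rfl⟩

/-- Membership in `ℍ_μ`, and `ℍ_μ ∩ ({0} × 𝔼)`. -/
theorem stmt4 :
    (∀ q : ℂ × ℂ × ℂ × ℂ,
      q ∈ hexMu ↔
        (q.2 ∈ tetrablock ∧ ‖q.1‖ * Kstar q.2 < 1 ∧
          (q.1 = 0 → q.2.1 * q.2.2.1 = q.2.2.2))) ∧
    hexMu ∩ {q : ℂ × ℂ × ℂ × ℂ | q.1 = 0 ∧ q.2 ∈ tetrablock}
      = {q : ℂ × ℂ × ℂ × ℂ | q ∈ hexMu ∧ q.1 = 0 ∧ q.2.1 * q.2.2.1 = q.2.2.2} := by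
  refine ⟨mem_hexMu_iff, Set.ext fun q => ⟨?_, ?_⟩⟩
  · rintro ⟨hq, h0, -⟩
    exact ⟨hq, h0, ((mem_hexMu_iff q).mp hq).2.2 h0⟩
  · rintro ⟨hq, h0, -⟩
    exact ⟨hq, h0, ((mem_hexMu_iff q).mp hq).1⟩
end
end

section
/- ℍ_μ is not an open subset of ℂ⁴. More precisely: no point (0, x₁, x₂, x₁x₂) with (x₁, x₂, x₁x₂) ∈ 𝔼 is an interior point of ℍ_μ, and the interior of ℍ_μ in ℂ⁴ equals {(a, x₁, x₂, x₃) ∈ ℍ_μ : a ≠ 0} = ℍ_μ \ ({0} × 𝔼). -/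
noncomputable section

open Complex

/-!
For upper triangular `X`, `det (1 - A X)` depends on `A` only through `q = π(A)`, so
`μ_hexa(A)⁻¹` is a function `muRadius q` of `q`; it is lower semicontinuous because the
admissible `X` of norm at most `s` form a compact set. Every `q` with `a ≠ 0` is some `π(A)`,
so `ℍ_μ ∩ {a ≠ 0} = {1 < muRadius} ∩ {a ≠ 0}` is open. When `a = 0`, however,
`q = π(A)` forces `x₃ = x₁ x₂`, so moving `x₃` alone leaves `ℍ_μ`: no such point is interior,
and since `0 ∈ ℍ_μ`, the set `ℍ_μ` is not open.
-/

open Filter Topology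
-- `‖X‖` is the L2 operator norm of a matrix, which is `opNorm2 X` by definition.
open scoped Matrix.Norms.L2Operator

namespace Hexablock

def hexDet (q : ℂ × ℂ × ℂ × ℂ) (X : Matrix (Fin 2) (Fin 2) ℂ) : ℂ :=
  hexDen q.2 (X 0 0) (X 1 1) - q.1 * X 0 1

lemma det_one_sub_mul_eq_hexDet (A X : Matrix (Fin 2) (Fin 2) ℂ) (hX : X 1 0 = 0) :
    (1 - A * X).det = hexDet (piMap A) X := by
  simp only [Matrix.det_fin_two, Matrix.sub_apply, Matrix.one_apply_eq, Matrix.one_apply_ne,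
    Matrix.mul_apply, Fin.sum_univ_two, hX, ne_eq, zero_ne_one, one_ne_zero, not_false_eq_true,
    hexDet, hexDen, piMap]
  ring

lemma continuous_hexDet :
    Continuous fun p : (ℂ × ℂ × ℂ × ℂ) × Matrix (Fin 2) (Fin 2) ℂ => hexDet p.1 p.2 := by
  unfold hexDet hexDen
  fun_prop

def muRadius (q : ℂ × ℂ × ℂ × ℂ) : ENNReal :=
  sInf {r | ∃ X : Matrix (Fin 2) (Fin 2) ℂ, X 1 0 = 0 ∧ hexDet q X = 0 ∧ r = ENNReal.ofReal ‖X‖}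

lemma muRadius_le {q : ℂ × ℂ × ℂ × ℂ} {X : Matrix (Fin 2) (Fin 2) ℂ} (hX₀ : X 1 0 = 0)
    (hX : hexDet q X = 0) : muRadius q ≤ ENNReal.ofReal ‖X‖ :=
  sInf_le ⟨X, hX₀, hX, rfl⟩

lemma le_muRadius {q : ℂ × ℂ × ℂ × ℂ} {r : ENNReal}
    (h : ∀ X : Matrix (Fin 2) (Fin 2) ℂ, X 1 0 = 0 → hexDet q X = 0 → r ≤ ENNReal.ofReal ‖X‖) :
    r ≤ muRadius q :=
  le_sInf fun _ ⟨X, hX₀, hX, hr⟩ => hr ▸ h X hX₀ hX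

lemma muHexa_eq_inv_muRadius (A : Matrix (Fin 2) (Fin 2) ℂ) :
    muHexa A = (muRadius (piMap A))⁻¹ := by
  unfold muHexa muRadius
  congr 3 with r
  refine exists_congr fun X => and_congr_right fun hX => ?_
  rw [det_one_sub_mul_eq_hexDet A X hX]
  rfl

lemma mem_hexMu_iff {q : ℂ × ℂ × ℂ × ℂ} : q ∈ hexMu ↔ q ∈ Set.range piMap ∧ 1 < muRadius q := by
  simp only [hexMu, Set.mem_ofPred_eq, Set.mem_range, muHexa_eq_inv_muRadius, ENNReal.inv_lt_one]
  constructor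
  · rintro ⟨A, hA, rfl⟩
    exact ⟨⟨A, rfl⟩, hA⟩
  · rintro ⟨⟨A, rfl⟩, hA⟩
    exact ⟨A, hA, rfl⟩

lemma mem_range_piMap_of_fst_ne_zero {q : ℂ × ℂ × ℂ × ℂ} (hq : q.1 ≠ 0) :
    q ∈ Set.range piMap := by
  obtain ⟨a, x₁, x₂, x₃⟩ := q
  refine ⟨!![x₁, (x₁ * x₂ - x₃) / a; a, x₂], ?_⟩
  simp only [piMap, Matrix.det_fin_two_of, Matrix.of_apply, Matrix.cons_val', Matrix.cons_val_zero,
    Matrix.cons_val_one, Matrix.empty_val', Matrix.cons_val_fin_one]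
  congr
  field_simp [show a ≠ 0 from hq]
  ring

lemma eq_mul_of_mem_range_piMap {q : ℂ × ℂ × ℂ × ℂ} (hq : q ∈ Set.range piMap) (h₀ : q.1 = 0) :
    q.2.2.2 = q.2.1 * q.2.2.1 := by
  obtain ⟨A, rfl⟩ := hq
  simp only [piMap] at h₀ ⊢
  rw [Matrix.det_fin_two, h₀, mul_zero, sub_zero]

lemma snd_mem_tetrablock_of_one_lt_muRadius {q : ℂ × ℂ × ℂ × ℂ} (hq : 1 < muRadius q) :
    q.2 ∈ tetrablock := by
  intro z₁ z₂ hz₁ hz₂ hden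
  have hX : ‖Matrix.diagonal ![z₁, z₂]‖ ≤ 1 := by
    rw [Matrix.l2_opNorm_diagonal, pi_norm_le_iff_of_nonneg zero_le_one]
    simp [Fin.forall_fin_two, hz₁, hz₂]
  have hadm : muRadius q ≤ ENNReal.ofReal ‖Matrix.diagonal ![z₁, z₂]‖ :=
    muRadius_le (by simp) (by simp [hexDet, hden])
  exact (hq.trans_le (hadm.trans (ENNReal.ofReal_le_one.mpr hX))).false

lemma lowerSemicontinuous_muRadius : LowerSemicontinuous muRadius := by
  intro q₀ y hy
  obtain ⟨s, -, hys, hsq₀⟩ := ENNReal.lt_iff_exists_real_btwn.mp hy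
  set K := {X : Matrix (Fin 2) (Fin 2) ℂ | X 1 0 = 0} ∩ Metric.closedBall 0 s
  have hK : IsCompact K :=
    (isCompact_closedBall 0 s).inter_left (isClosed_eq (by fun_prop) continuous_const)
  have hK₀ : ∀ X ∈ K, hexDet q₀ X ≠ 0 := fun X hXK hX =>
    hsq₀.not_ge <| (muRadius_le hXK.1 hX).trans <|
      ENNReal.ofReal_le_ofReal (mem_closedBall_zero_iff.mp hXK.2)
  have hev : ∀ᶠ q in 𝓝 q₀, ∀ X ∈ K, hexDet q X ≠ 0 :=
    hK.eventually_forall_of_forall_eventually fun X hX =>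
      (isOpen_ne_fun continuous_hexDet continuous_const).mem_nhds (hK₀ X hX)
  filter_upwards [hev] with q hq
  refine hys.trans_le (le_muRadius fun X hX0 hX => ?_)
  by_contra! hlt
  exact hq X ⟨hX0, mem_closedBall_zero_iff.mpr (ENNReal.ofReal_lt_ofReal_iff'.mp hlt).1.le⟩ hX

lemma not_mem_interior_hexMu {q : ℂ × ℂ × ℂ × ℂ} (h₀ : q.1 = 0) : q ∉ interior hexMu := by
  intro hq
  let shift : ℂ → ℂ × ℂ × ℂ × ℂ := fun δ => (q.1, q.2.1, q.2.2.1, q.2.2.2 + δ)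
  have hshift : ∀ δ ∈ shift ⁻¹' interior hexMu, q.2.2.2 + δ = q.2.1 * q.2.2.1 := fun δ hδ =>
    eq_mul_of_mem_range_piMap (mem_hexMu_iff.mp (interior_subset hδ)).1 h₀
  have hq₀ : q.2.2.2 = q.2.1 * q.2.2.1 := by simpa using hshift 0 (by simpa [shift] using hq)
  have hslice : shift ⁻¹' interior hexMu = {0} := by
    refine Set.eq_singleton_iff_unique_mem.mpr ⟨by simpa [shift] using hq, fun δ hδ => ?_⟩
    simpa [hq₀] using hshift δ hδ
  exact not_isOpen_singleton (0 : ℂ) (hslice ▸ isOpen_interior.preimage (by fun_prop))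

lemma interior_hexMu : interior hexMu = {q | q ∈ hexMu ∧ q.1 ≠ 0} := by
  refine subset_antisymm (fun q hq => ⟨interior_subset hq, fun h₀ => not_mem_interior_hexMu h₀ hq⟩)
    (interior_maximal (fun q hq => hq.1) ?_)
  have hopen : IsOpen ({q : ℂ × ℂ × ℂ × ℂ | q.1 ≠ 0} ∩ {q | 1 < muRadius q}) :=
    (isOpen_ne_fun continuous_fst continuous_const).inter
      (lowerSemicontinuous_muRadius.isOpen_preimage 1)
  convert hopen using 1
  ext q
  simp only [Set.mem_ofPred_eq, Set.mem_inter_iff, mem_hexMu_iff]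
  exact ⟨fun ⟨⟨_, h⟩, h₀⟩ => ⟨h₀, h⟩, fun ⟨h₀, h⟩ => ⟨⟨mem_range_piMap_of_fst_ne_zero h₀, h⟩, h₀⟩⟩

lemma zero_mem_hexMu : (0 : ℂ × ℂ × ℂ × ℂ) ∈ hexMu := by
  refine mem_hexMu_iff.mpr ⟨⟨0, by simp [piMap]⟩, ?_⟩
  have hempty : muRadius 0 = ⊤ :=
    top_le_iff.mp (le_muRadius fun X _ hX => by simp [hexDet, hexDen] at hX)
  simp [hempty]

end Hexablock

open Hexablock in
/-- `ℍ_μ` is not open; points `(0, x₁, x₂, x₁x₂)` with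
`(x₁, x₂, x₁x₂) ∈ 𝔼` are not interior, and `interior ℍ_μ = {q ∈ ℍ_μ : a ≠ 0}
= ℍ_μ \ ({0} × 𝔼)`. -/
theorem stmt5 :
    ¬ IsOpen hexMu ∧
    (∀ x₁ x₂ : ℂ, (x₁, x₂, x₁ * x₂) ∈ tetrablock →
      (0, x₁, x₂, x₁ * x₂) ∉ interior hexMu) ∧
    interior hexMu = {q : ℂ × ℂ × ℂ × ℂ | q ∈ hexMu ∧ q.1 ≠ 0} ∧
    interior hexMu = hexMu \ {q : ℂ × ℂ × ℂ × ℂ | q.1 = 0 ∧ q.2 ∈ tetrablock} := by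
  refine ⟨fun hopen => ?_, fun _ _ _ => not_mem_interior_hexMu rfl, interior_hexMu, ?_⟩
  · exact not_mem_interior_hexMu (q := 0) rfl (hopen.interior_eq.symm ▸ zero_mem_hexMu)
  · rw [interior_hexMu]
    ext q
    have htet : q ∈ hexMu → q.2 ∈ tetrablock := fun hq =>
      snd_mem_tetrablock_of_one_lt_muRadius (mem_hexMu_iff.mp hq).2
    simp only [Set.mem_ofPred_eq, Set.mem_sdiff, not_and]
    exact ⟨fun ⟨hq, h₀⟩ => ⟨hq, fun h => (h₀ h).elim⟩,
      fun ⟨hq, h⟩ => ⟨hq, fun h₀ => h h₀ (htet hq)⟩⟩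
end
end

section
/- The closure of ℍ_μ in ℂ⁴ is a compact, polynomially convex set. -/
noncomputable section

open Complex

/-!
For upper triangular `X`, `det (1 - A X)` depends only on `q = π A`, and along a line `X = z U`
it is the quadratic `1 - s z + p z²`, where `(s, p)` depends linearly on `q`. So `μ_hexa A < 1`
forces `(s, p)` into the closed symmetrized bidisc `Γ` for every upper triangular contraction `U`,
and the set `K` of all `q` with this property is closed and bounded. Conversely, dilating a point
of `K` by `t < 1` and nudging its first coordinate off `0` gives a point of `ℍ_μ`, because on `K`
the quadratic is bounded below by `(1 - ‖X‖)²`; hence `K = closure ℍ_μ`. Polynomial convexity is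
inherited from that of `Γ`: outside `Γ` either `|p| > 1` or some power sum `μⁿ + νⁿ`, a Dickson
polynomial in `(s, p)`, exceeds `2` in modulus, and `s`, `p` are polynomials in `q`.
-/

open Metric Filter Topology Polynomial

def symmBidisc : Set (ℂ × ℂ) :=
  (fun p : ℂ × ℂ => (p.1 + p.2, p.1 * p.2)) '' (closedBall 0 1 ×ˢ closedBall 0 1)

/-- `(1 - μ z)(1 - ν z)` written in terms of `s = μ + ν` and `p = μ ν`. -/
def bidiscQuad (w : ℂ × ℂ) (z : ℂ) : ℂ := 1 - w.1 * z + w.2 * z ^ 2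

namespace symmBidisc

lemma mem_iff {w : ℂ × ℂ} :
    w ∈ symmBidisc ↔ ∃ μ ν : ℂ, ‖μ‖ ≤ 1 ∧ ‖ν‖ ≤ 1 ∧ μ + ν = w.1 ∧ μ * ν = w.2 := by
  simp [symmBidisc, Prod.ext_iff, and_assoc]

lemma isCompact : IsCompact symmBidisc :=
  ((isCompact_closedBall _ _).prod (isCompact_closedBall _ _)).image (by fun_prop)

lemma exists_add_eq_mul_eq (w : ℂ × ℂ) : ∃ μ ν : ℂ, μ + ν = w.1 ∧ μ * ν = w.2 := by
  obtain ⟨d, hd⟩ := IsAlgClosed.exists_pow_nat_eq (w.1 ^ 2 - 4 * w.2) two_pos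
  exact ⟨(w.1 + d) / 2, (w.1 - d) / 2, by ring, by linear_combination (-1 / 4 : ℂ) * hd⟩

lemma bidiscQuad_eq {w : ℂ × ℂ} {μ ν : ℂ} (hs : μ + ν = w.1) (hp : μ * ν = w.2) (z : ℂ) :
    bidiscQuad w z = (1 - μ * z) * (1 - ν * z) := by
  rw [bidiscQuad, ← hs, ← hp]
  ring

lemma mem_of_forall_ne_zero {w : ℂ × ℂ} (h : ∀ z : ℂ, ‖z‖ < 1 → bidiscQuad w z ≠ 0) :
    w ∈ symmBidisc := by
  obtain ⟨μ, ν, hs, hp⟩ := exists_add_eq_mul_eq w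
  have root_le_one : ∀ μ' ν' : ℂ, μ' + ν' = w.1 → μ' * ν' = w.2 → ‖μ'‖ ≤ 1 := by
    intro μ' ν' hs' hp'
    by_contra! hμ'
    have hne : μ' ≠ 0 := norm_pos_iff.mp (one_pos.trans hμ')
    refine h μ'⁻¹ (by rwa [norm_inv, inv_lt_one₀ (one_pos.trans hμ')]) ?_
    rw [bidiscQuad_eq hs' hp', mul_inv_cancel₀ hne, sub_self, zero_mul]
  exact mem_iff.mpr ⟨μ, ν, root_le_one μ ν hs hp,
    root_le_one ν μ (by rw [add_comm, hs]) (by rw [mul_comm, hp]), hs, hp⟩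

lemma sq_one_sub_norm_le {w : ℂ × ℂ} (hw : w ∈ symmBidisc) {z : ℂ} (hz : ‖z‖ ≤ 1) :
    (1 - ‖z‖) ^ 2 ≤ ‖bidiscQuad w z‖ := by
  obtain ⟨μ, ν, hμ, hν, hs, hp⟩ := mem_iff.mp hw
  have factor_ge : ∀ a : ℂ, ‖a‖ ≤ 1 → 1 - ‖z‖ ≤ ‖1 - a * z‖ := fun a ha =>
    calc 1 - ‖z‖ ≤ ‖(1 : ℂ)‖ - ‖a * z‖ := by
          rw [norm_one, norm_mul]; nlinarith [norm_nonneg a, norm_nonneg z]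
      _ ≤ ‖1 - a * z‖ := norm_sub_norm_le _ _
  rw [bidiscQuad_eq hs hp, norm_mul, sq]
  exact mul_le_mul (factor_ge μ hμ) (factor_ge ν hν) (by linarith) (norm_nonneg _)

lemma norm_fst_le {w : ℂ × ℂ} (hw : w ∈ symmBidisc) : ‖w.1‖ ≤ 2 := by
  obtain ⟨μ, ν, hμ, hν, hs, -⟩ := mem_iff.mp hw
  rw [← hs]
  linarith [norm_add_le μ ν]

lemma norm_snd_le {w : ℂ × ℂ} (hw : w ∈ symmBidisc) : ‖w.2‖ ≤ 1 := by
  obtain ⟨μ, ν, hμ, hν, -, hp⟩ := mem_iff.mp hw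
  rw [← hp, norm_mul]
  exact mul_le_one₀ hμ (norm_nonneg ν) hν

end symmBidisc

lemma dickson_one_eval_add {R : Type*} [CommRing R] (μ ν : R) (n : ℕ) :
    (dickson 1 (μ * ν) n).eval (μ + ν) = μ ^ n + ν ^ n := by
  induction n using Nat.twoStepInduction with
  | zero => simp only [dickson_zero, eval_sub, eval_ofNat, pow_zero]; norm_num
  | one => simp [dickson_one]
  | more n ih₀ ih₁ =>
    rw [dickson_add_two, eval_sub, eval_mul, eval_mul, eval_X, eval_C, ih₀, ih₁]
    ring

namespace symmBidisc

lemma norm_dickson_eval_le {w : ℂ × ℂ} (hw : w ∈ symmBidisc) (n : ℕ) :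
    ‖(dickson 1 w.2 n).eval w.1‖ ≤ 2 := by
  obtain ⟨μ, ν, hμ, hν, hs, hp⟩ := mem_iff.mp hw
  rw [← hs, ← hp, dickson_one_eval_add]
  calc ‖μ ^ n + ν ^ n‖ ≤ ‖μ‖ ^ n + ‖ν‖ ^ n := by rw [← norm_pow, ← norm_pow]; exact norm_add_le _ _
    _ ≤ 1 + 1 := add_le_add (pow_le_one₀ (norm_nonneg _) hμ) (pow_le_one₀ (norm_nonneg _) hν)
    _ = 2 := one_add_one_eq_two

lemma exists_separating_of_not_mem {w : ℂ × ℂ} (hw : w ∉ symmBidisc) :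
    1 < ‖w.2‖ ∨ ∃ n : ℕ, 2 < ‖(dickson 1 w.2 n).eval w.1‖ := by
  rw [or_iff_not_imp_left, not_lt]
  intro hp1
  obtain ⟨μ, ν, hs, hp⟩ := exists_add_eq_mul_eq w
  have big_root : ∀ μ' ν' : ℂ, μ' + ν' = w.1 → μ' * ν' = w.2 → 1 < ‖μ'‖ →
      ∃ n : ℕ, 2 < ‖(dickson 1 w.2 n).eval w.1‖ := by
    intro μ' ν' hs' hp' hμ'
    have hν' : ‖ν'‖ ≤ 1 := by
      by_contra! hν'
      nlinarith [norm_mul μ' ν', congrArg norm hp']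
    obtain ⟨n, hn⟩ := pow_unbounded_of_one_lt 3 hμ'
    refine ⟨n, ?_⟩
    rw [← hs', ← hp', dickson_one_eval_add]
    calc (2 : ℝ) < ‖μ' ^ n‖ - ‖ν' ^ n‖ := by
          rw [norm_pow, norm_pow]; linarith [pow_le_one₀ (n := n) (norm_nonneg ν') hν']
      _ ≤ ‖μ' ^ n + ν' ^ n‖ := by simpa using norm_sub_norm_le (μ' ^ n) (-ν' ^ n)
  by_cases hμ : 1 < ‖μ‖
  · exact big_root μ ν hs hp hμ
  · refine big_root ν μ (by rw [add_comm, hs]) (by rw [mul_comm, hp]) ?_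
    by_contra! hν
    exact hw (mem_iff.mpr ⟨μ, ν, not_lt.mp hμ, hν, hs, hp⟩)

end symmBidisc

-- Under this instance `‖X‖` is `opNorm2 X` by definition.
open scoped Matrix.Norms.L2Operator

def hexPair (q : ℂ × ℂ × ℂ × ℂ) (X : Matrix (Fin 2) (Fin 2) ℂ) : ℂ × ℂ :=
  (q.2.1 * X 0 0 + q.1 * X 0 1 + q.2.2.1 * X 1 1, q.2.2.2 * (X 0 0 * X 1 1))

lemma det_one_sub_mul_eq_bidiscQuad (A X : Matrix (Fin 2) (Fin 2) ℂ) (hX : X 1 0 = 0) :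
    (1 - A * X).det = bidiscQuad (hexPair (piMap A) X) 1 := by
  simp only [Matrix.det_fin_two, Matrix.sub_apply, Matrix.mul_apply, Fin.sum_univ_two, hX,
    Matrix.one_apply_eq, Matrix.one_apply_ne zero_ne_one, Matrix.one_apply_ne one_ne_zero,
    bidiscQuad, hexPair, piMap]
  ring

lemma bidiscQuad_hexPair_smul (q : ℂ × ℂ × ℂ × ℂ) (X : Matrix (Fin 2) (Fin 2) ℂ) (z : ℂ) :
    bidiscQuad (hexPair q (z • X)) 1 = bidiscQuad (hexPair q X) z := by
  simp only [bidiscQuad, hexPair, Matrix.smul_apply, smul_eq_mul]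
  ring

lemma Matrix.norm_entry_le_l2_opNorm {n : Type*} [Fintype n] [DecidableEq n]
    (X : Matrix n n ℂ) (i j : n) : ‖X i j‖ ≤ ‖X‖ := by
  have h := Matrix.l2_opNorm_mulVec X (EuclideanSpace.single j 1)
  rw [PiLp.norm_single, norm_one, mul_one] at h
  refine le_trans (le_of_eq ?_) ((PiLp.norm_apply_le _ i).trans h)
  simp [Matrix.mulVec_single]

lemma Matrix.l2_opNorm_diagonal_le_one {n : Type*} [Fintype n] [DecidableEq n] {v : n → ℂ}
    (hv : ∀ i, ‖v i‖ ≤ 1) : ‖Matrix.diagonal v‖ ≤ 1 := by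
  rw [Matrix.l2_opNorm_diagonal]
  exact pi_norm_le_iff_of_nonneg zero_le_one |>.mpr hv

lemma l2_opNorm_nilpotent_le_one : ‖!![(0 : ℂ), 1; 0, 0]‖ ≤ 1 := by
  have hN : (!![(0 : ℂ), 1; 0, 0]).conjTranspose * !![0, 1; 0, 0] = Matrix.diagonal ![0, 1] := by
    ext i j
    fin_cases i <;> fin_cases j <;> simp [Matrix.mul_apply]
  have h := Matrix.l2_opNorm_conjTranspose_mul_self (!![(0 : ℂ), 1; 0, 0])
  rw [hN] at h
  have h1 : ‖(Matrix.diagonal ![0, 1] : Matrix (Fin 2) (Fin 2) ℂ)‖ ≤ 1 :=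
    Matrix.l2_opNorm_diagonal_le_one (by simp [Fin.forall_fin_two])
  nlinarith [norm_nonneg (!![(0 : ℂ), 1; 0, 0])]

lemma one_lt_norm_of_muHexa_lt_one {A X : Matrix (Fin 2) (Fin 2) ℂ} (hA : muHexa A < 1)
    (hX : X 1 0 = 0) (hdet : (1 - A * X).det = 0) : 1 < ‖X‖ := by
  rw [muHexa, ENNReal.inv_lt_one] at hA
  exact ENNReal.one_lt_ofReal.mp (hA.trans_le (sInf_le ⟨X, hX, hdet, rfl⟩))

lemma muHexa_lt_one_of_le_norm (A : Matrix (Fin 2) (Fin 2) ℂ) {T : ℝ} (hT : 1 < T)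
    (h : ∀ X : Matrix (Fin 2) (Fin 2) ℂ, X 1 0 = 0 → (1 - A * X).det = 0 → T ≤ ‖X‖) :
    muHexa A < 1 := by
  rw [muHexa, ENNReal.inv_lt_one]
  refine (ENNReal.one_lt_ofReal.mpr hT).trans_le (le_sInf ?_)
  rintro r ⟨X, hX, hdet, rfl⟩
  exact ENNReal.ofReal_le_ofReal (h X hX hdet)

lemma piMap_eq_of_fst_ne_zero {q : ℂ × ℂ × ℂ × ℂ} (hq : q.1 ≠ 0) :
    piMap !![q.2.1, (q.2.1 * q.2.2.1 - q.2.2.2) / q.1; q.1, q.2.2.1] = q := by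
  simp [piMap, Matrix.det_fin_two, div_mul_cancel₀ _ hq]

def hexMuBar : Set (ℂ × ℂ × ℂ × ℂ) :=
  {q | ∀ U : Matrix (Fin 2) (Fin 2) ℂ, U 1 0 = 0 → ‖U‖ ≤ 1 → hexPair q U ∈ symmBidisc}

namespace hexMuBar

lemma isClosed : IsClosed hexMuBar := by
  have h : hexMuBar = ⋂ (U : Matrix (Fin 2) (Fin 2) ℂ) (_ : U 1 0 = 0) (_ : ‖U‖ ≤ 1),
      (fun q => hexPair q U) ⁻¹' symmBidisc := by
    ext q
    simp [hexMuBar]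
  rw [h]
  refine isClosed_iInter fun U => isClosed_iInter fun _ => isClosed_iInter fun _ =>
    symmBidisc.isCompact.isClosed.preimage ?_
  unfold hexPair
  fun_prop

lemma norm_le_two {q : ℂ × ℂ × ℂ × ℂ} (hq : q ∈ hexMuBar) : ‖q‖ ≤ 2 := by
  have diag_le : ∀ a b : ℂ, ‖a‖ ≤ 1 → ‖b‖ ≤ 1 → ‖Matrix.diagonal ![a, b]‖ ≤ 1 :=
    fun a b ha hb => Matrix.l2_opNorm_diagonal_le_one (by simp [Fin.forall_fin_two, ha, hb])
  have h₁ := symmBidisc.norm_fst_le (hq _ rfl l2_opNorm_nilpotent_le_one)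
  have h₂ := symmBidisc.norm_fst_le (hq (.diagonal ![1, 0]) rfl (diag_le _ _ (by simp) (by simp)))
  have h₃ := symmBidisc.norm_fst_le (hq (.diagonal ![0, 1]) rfl (diag_le _ _ (by simp) (by simp)))
  have h₄ := symmBidisc.norm_snd_le (hq (.diagonal ![1, 1]) rfl (diag_le _ _ (by simp) (by simp)))
  simp only [hexPair, Matrix.of_apply, Matrix.cons_val', Matrix.cons_val_zero, Matrix.cons_val_one,
    Matrix.cons_val_fin_one, Matrix.diagonal_apply_eq, Matrix.diagonal_apply_ne _ zero_ne_one,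
    mul_zero, mul_one, zero_add, add_zero] at h₁ h₂ h₃ h₄
  simp only [Prod.norm_def, max_le_iff]
  exact ⟨h₁, h₂, h₃, by linarith⟩

lemma isCompact : IsCompact hexMuBar :=
  (isCompact_closedBall 0 2).of_isClosed_subset isClosed fun _ hq =>
    mem_closedBall_zero_iff.mpr (norm_le_two hq)

lemma sq_one_sub_norm_le {q : ℂ × ℂ × ℂ × ℂ} (hq : q ∈ hexMuBar)
    {Y : Matrix (Fin 2) (Fin 2) ℂ} (hY : Y 1 0 = 0) (hY1 : ‖Y‖ ≤ 1) :
    (1 - ‖Y‖) ^ 2 ≤ ‖bidiscQuad (hexPair q Y) 1‖ := by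
  rcases eq_or_ne Y 0 with rfl | hY0
  · simp [bidiscQuad, hexPair]
  set U := ((‖Y‖ : ℂ)⁻¹) • Y
  have hYU : Y = (‖Y‖ : ℂ) • U := by
    rw [smul_smul, mul_inv_cancel₀ (by exact_mod_cast norm_ne_zero_iff.mpr hY0), one_smul]
  have hU : ‖U‖ ≤ 1 := by
    rw [norm_smul, norm_inv, Complex.norm_real, norm_norm,
      inv_mul_cancel₀ (norm_ne_zero_iff.mpr hY0)]
  have hU10 : U 1 0 = 0 := by simp [U, hY]
  have h := symmBidisc.sq_one_sub_norm_le (hq U hU10 hU) (z := ‖Y‖) (by simpa using hY1)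
  rwa [Complex.norm_real, norm_norm, ← bidiscQuad_hexPair_smul, ← hYU] at h

end hexMuBar

lemma hexMu_subset_hexMuBar : hexMu ⊆ hexMuBar := by
  rintro _ ⟨A, hA, rfl⟩ U hU hU1
  refine symmBidisc.mem_of_forall_ne_zero fun z hz hzero => ?_
  have hzU : (z • U) 1 0 = 0 := by simp [hU]
  have hdet : (1 - A * (z • U)).det = 0 := by
    rw [det_one_sub_mul_eq_bidiscQuad A _ hzU, bidiscQuad_hexPair_smul, hzero]
  have hsmall : ‖z • U‖ < 1 := by
    rw [norm_smul]
    nlinarith [norm_nonneg z, norm_nonneg U]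
  exact hsmall.not_gt (one_lt_norm_of_muHexa_lt_one hA hzU hdet)

lemma mem_hexMu_of_mem_hexMuBar {q : ℂ × ℂ × ℂ × ℂ} (hq : q ∈ hexMuBar) {t : ℝ}
    (ht : 1 / 2 < t) (ht1 : t < 1) {e : ℂ} (he : ‖e‖ ≤ (1 - t) ^ 2 / 8)
    (ha : (t : ℂ) * q.1 + e ≠ 0) :
    ((t : ℂ) * q.1 + e, (t : ℂ) * q.2.1, (t : ℂ) * q.2.2.1, (t : ℂ) ^ 2 * q.2.2.2) ∈ hexMu := by
  set p : ℂ × ℂ × ℂ × ℂ :=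
    ((t : ℂ) * q.1 + e, (t : ℂ) * q.2.1, (t : ℂ) * q.2.2.1, (t : ℂ) ^ 2 * q.2.2.2)
  have ht0 : 0 < t := by linarith
  refine ⟨_, ?_, piMap_eq_of_fst_ne_zero (q := p) ha⟩
  refine muHexa_lt_one_of_le_norm _ (T := (1 + t) / (2 * t))
    (by rw [lt_div_iff₀ (by positivity)]; linarith) fun X hX hdet => ?_
  by_contra! hXT
  have htX : t * ‖X‖ < (1 + t) / 2 := by
    rw [lt_div_iff₀ (by positivity)] at hXT
    linarith
  have hX32 : ‖X‖ < 3 / 2 := by nlinarith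
  have hperturb :
      bidiscQuad (hexPair p X) 1 = bidiscQuad (hexPair q ((t : ℂ) • X)) 1 - e * X 0 1 := by
    simp only [p, bidiscQuad, hexPair, Matrix.smul_apply, smul_eq_mul]
    ring
  rw [det_one_sub_mul_eq_bidiscQuad _ _ hX, piMap_eq_of_fst_ne_zero ha, hperturb,
    sub_eq_zero] at hdet
  have hnorm : ‖(t : ℂ) • X‖ = t * ‖X‖ := by
    rw [norm_smul, Complex.norm_real, Real.norm_of_nonneg ht0.le]
  have hlow := hexMuBar.sq_one_sub_norm_le hq (Y := (t : ℂ) • X) (by simp [hX]) (by linarith)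
  rw [hdet, norm_mul, hnorm] at hlow
  have hentry := Matrix.norm_entry_le_l2_opNorm X 0 1
  nlinarith [norm_nonneg e, norm_nonneg (X 0 1)]

lemma hexMuBar_subset_closure_hexMu : hexMuBar ⊆ closure hexMu := by
  intro q hq
  set f : ℝ → ℂ × ℂ × ℂ × ℂ := fun t =>
    ((t : ℂ) * q.1 + ((1 - t) ^ 2 / 8 : ℝ), (t : ℂ) * q.2.1, (t : ℂ) * q.2.2.1,
      (t : ℂ) ^ 2 * q.2.2.2)
  have hf : Tendsto f (𝓝[<] 1) (𝓝 q) := by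
    have hcont : Continuous f := by fun_prop
    simpa [f] using (hcont.tendsto 1).mono_left nhdsWithin_le_nhds
  have hne : ∀ᶠ t in 𝓝[<] 1, (f t).1 ≠ 0 := by
    rcases eq_or_ne q.1 0 with h0 | h0
    · filter_upwards [self_mem_nhdsWithin] with t (ht : t < 1)
      have : (1 : ℂ) - t ≠ 0 := by exact_mod_cast (sub_pos.mpr ht).ne'
      simpa [f, h0] using this
    · exact hf.fst_nhds.eventually_ne h0
  refine mem_closure_of_tendsto hf ?_
  filter_upwards [hne, Ioo_mem_nhdsLT (show (1 / 2 : ℝ) < 1 by norm_num)] with t hne ht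
  refine mem_hexMu_of_mem_hexMuBar hq ht.1 ht.2 ?_ hne
  rw [Complex.norm_real, Real.norm_of_nonneg (by positivity)]

lemma closure_hexMu : closure hexMu = hexMuBar :=
  (closure_minimal hexMu_subset_hexMuBar hexMuBar.isClosed).antisymm hexMuBar_subset_closure_hexMu

def hexSumPoly (U : Matrix (Fin 2) (Fin 2) ℂ) : MvPolynomial (Fin 4) ℂ :=
  .X 1 * .C (U 0 0) + .X 0 * .C (U 0 1) + .X 2 * .C (U 1 1)

def hexProdPoly (U : Matrix (Fin 2) (Fin 2) ℂ) : MvPolynomial (Fin 4) ℂ :=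
  .X 3 * .C (U 0 0 * U 1 1)

lemma evalPoly4_hexSumPoly (U : Matrix (Fin 2) (Fin 2) ℂ) (w : ℂ × ℂ × ℂ × ℂ) :
    evalPoly4 (hexSumPoly U) w = (hexPair w U).1 := by
  simp [evalPoly4, hexSumPoly, hexPair]

lemma evalPoly4_hexProdPoly (U : Matrix (Fin 2) (Fin 2) ℂ) (w : ℂ × ℂ × ℂ × ℂ) :
    evalPoly4 (hexProdPoly U) w = (hexPair w U).2 := by
  simp [evalPoly4, hexProdPoly, hexPair]

lemma evalPoly4_dickson (U : Matrix (Fin 2) (Fin 2) ℂ) (n : ℕ) (w : ℂ × ℂ × ℂ × ℂ) :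
    evalPoly4 ((dickson 1 (hexProdPoly U) n).eval (hexSumPoly U)) w =
      (dickson 1 (hexPair w U).2 n).eval (hexPair w U).1 := by
  rw [← evalPoly4_hexSumPoly, ← evalPoly4_hexProdPoly, evalPoly4, evalPoly4, evalPoly4,
    ← eval_map_apply, map_dickson]

lemma hexMuBar.polyConvex : PolyConvex hexMuBar := by
  intro z hz
  obtain ⟨U, hU, hU1, hzU⟩ : ∃ U : Matrix (Fin 2) (Fin 2) ℂ, U 1 0 = 0 ∧ ‖U‖ ≤ 1 ∧
      hexPair z U ∉ symmBidisc := by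
    simpa [hexMuBar] using hz
  rcases symmBidisc.exists_separating_of_not_mem hzU with hprod | ⟨n, hn⟩
  · refine ⟨hexProdPoly U, fun w hw => ?_, by rwa [evalPoly4_hexProdPoly]⟩
    rw [evalPoly4_hexProdPoly]
    exact symmBidisc.norm_snd_le (hw U hU hU1)
  · refine ⟨.C (1 / 2) * (dickson 1 (hexProdPoly U) n).eval (hexSumPoly U), fun w hw => ?_, ?_⟩
    all_goals rw [evalPoly4, map_mul, MvPolynomial.eval_C, ← evalPoly4, evalPoly4_dickson,
      norm_mul, norm_div, norm_one, Complex.norm_two]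
    · linarith [symmBidisc.norm_dickson_eval_le (hw U hU hU1) n]
    · linarith

/-- `closure ℍ_μ` is compact and polynomially convex. -/
theorem stmt7 : IsCompact (closure hexMu) ∧ PolyConvex (closure hexMu) := by
  rw [closure_hexMu]
  exact ⟨hexMuBar.isCompact, hexMuBar.polyConvex⟩
end
end

section
/- There exists A = (a_{ij}) ∈ M₂(ℂ) with a₂₁ ≠ 0 and μ_hexa(A) < ‖A‖. Moreover ℍ_N ⊆ ℍ_μ, and ℍ_μ \ ℍ_N contains a nonempty open subset of ℂ⁴; in particular ℍ_N is a proper subset of ℍ_μ. -/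
noncomputable section

open Complex

/-! `μ_hexa(A) ≤ ‖A‖`, because a singular `1 - AX` forces `1 ≤ ‖AX‖ ≤ ‖A‖ ‖X‖`.
For upper triangular `X`, `det (1 - AX) = 1 - a₁₁x₁₁ - a₂₁x₁₂ - a₂₂x₂₂ + det A · x₁₁x₂₂` depends
on `A` only through `π(A)`. Near `π(A) = (1/10, 0, 0, -1/5)` it cannot vanish when `‖X‖ < 9/5`, so
`μ_hexa(A) < 1`; but there `|a₁₂| = |a₁₁a₂₂ - det A| / |a₂₁| > 1`, so `‖A‖ ≥ 1`. -/

open Metric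

lemma norm_apply_le_norm_toEuclideanCLM {𝕜 n : Type*} [RCLike 𝕜] [Fintype n] [DecidableEq n]
    (A : Matrix n n 𝕜) (i j : n) : ‖A i j‖ ≤ ‖Matrix.toEuclideanCLM (𝕜 := 𝕜) A‖ := by
  have hcol : Matrix.toEuclideanCLM (𝕜 := 𝕜) A (EuclideanSpace.single j 1) i = A i j := by
    simp [EuclideanSpace.single, Matrix.mulVec_single]
  calc ‖A i j‖ ≤ ‖Matrix.toEuclideanCLM (𝕜 := 𝕜) A (EuclideanSpace.single j 1)‖ :=
        hcol ▸ PiLp.norm_apply_le _ i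
    _ ≤ ‖Matrix.toEuclideanCLM (𝕜 := 𝕜) A‖ := by
        simpa using (Matrix.toEuclideanCLM (𝕜 := 𝕜) A).le_opNorm (EuclideanSpace.single j 1)

lemma norm_apply_le_opNorm2 (A : Matrix (Fin 2) (Fin 2) ℂ) (i j : Fin 2) :
    ‖A i j‖ ≤ opNorm2 A :=
  norm_apply_le_norm_toEuclideanCLM A i j

lemma opNorm2_mul_le (A B : Matrix (Fin 2) (Fin 2) ℂ) :
    opNorm2 (A * B) ≤ opNorm2 A * opNorm2 B := by
  simpa only [opNorm2, map_mul] using norm_mul_le _ _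

lemma one_le_opNorm2_of_det_one_sub_eq_zero {M : Matrix (Fin 2) (Fin 2) ℂ}
    (h : (1 - M).det = 0) : 1 ≤ opNorm2 M := by
  have hM : ¬ IsUnit (1 - M) := by
    rw [Matrix.isUnit_iff_isUnit_det, h]; exact not_isUnit_zero
  have hs : (1 : ℂ) ∈ spectrum ℂ (Matrix.toEuclideanCLM (𝕜 := ℂ) M) := by
    rw [spectrum.mem_iff]
    intro hu
    exact hM (by simpa [map_sub, map_one] using hu.map (Matrix.toEuclideanCLM (𝕜 := ℂ)).symm)
  simpa [opNorm2] using spectrum.norm_le_norm_of_mem hs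

lemma muHexa_le_opNorm2 (A : Matrix (Fin 2) (Fin 2) ℂ) :
    muHexa A ≤ ENNReal.ofReal (opNorm2 A) := by
  rw [muHexa, ENNReal.inv_le_iff_inv_le]
  refine le_sInf ?_
  rintro _ ⟨X, -, hdet, rfl⟩
  have hAX : 1 ≤ opNorm2 A * opNorm2 X :=
    (one_le_opNorm2_of_det_one_sub_eq_zero hdet).trans (opNorm2_mul_le A X)
  rw [ENNReal.inv_le_iff_le_mul (by simp) (by simp),
    ← ENNReal.ofReal_mul (p := opNorm2 A) (norm_nonneg _)]
  exact ENNReal.one_le_ofReal.2 hAX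

lemma hexN_subset_hexMu : hexN ⊆ hexMu := by
  rintro _ ⟨A, hA, rfl⟩
  exact ⟨A, (muHexa_le_opNorm2 A).trans_lt (ENNReal.ofReal_lt_one.2 hA), rfl⟩

lemma muHexa_lt_one_of_forall_le_opNorm2 {A : Matrix (Fin 2) (Fin 2) ℂ} {r : ℝ} (hr : 1 < r)
    (h : ∀ X : Matrix (Fin 2) (Fin 2) ℂ, X 1 0 = 0 → (1 - A * X).det = 0 → r ≤ opNorm2 X) :
    muHexa A < 1 := by
  rw [muHexa, ENNReal.inv_lt_one]
  refine (ENNReal.one_lt_ofReal.2 hr).trans_le (le_sInf ?_)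
  rintro _ ⟨X, hX, hdet, rfl⟩
  exact ENNReal.ofReal_le_ofReal (h X hX hdet)

lemma det_one_sub_mul_of_upperTriangular (A X : Matrix (Fin 2) (Fin 2) ℂ) (hX : X 1 0 = 0) :
    (1 - A * X).det = 1 - A 0 0 * X 0 0 - A 1 0 * X 0 1 - A 1 1 * X 1 1
      + A.det * (X 0 0 * X 1 1) := by
  simp [Matrix.det_fin_two, Matrix.mul_apply, hX]
  ring

lemma one_le_of_det_one_sub_mul_eq_zero {A X : Matrix (Fin 2) (Fin 2) ℂ} (hX : X 1 0 = 0)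
    (hdet : (1 - A * X).det = 0) :
    1 ≤ ‖A 0 0‖ * ‖X 0 0‖ + ‖A 1 0‖ * ‖X 0 1‖ + ‖A 1 1‖ * ‖X 1 1‖
      + ‖A.det‖ * (‖X 0 0‖ * ‖X 1 1‖) := by
  rw [det_one_sub_mul_of_upperTriangular A X hX] at hdet
  have hone : (1 : ℂ) = A 0 0 * X 0 0 + A 1 0 * X 0 1 + A 1 1 * X 1 1
      - A.det * (X 0 0 * X 1 1) := by linear_combination hdet
  calc (1 : ℝ) = ‖A 0 0 * X 0 0 + A 1 0 * X 0 1 + A 1 1 * X 1 1 - A.det * (X 0 0 * X 1 1)‖ := by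
        rw [← hone, norm_one]
    _ ≤ ‖A 0 0 * X 0 0‖ + ‖A 1 0 * X 0 1‖ + ‖A 1 1 * X 1 1‖ + ‖A.det * (X 0 0 * X 1 1)‖ :=
        (norm_sub_le _ _).trans (by gcongr; exact norm_add₃_le)
    _ = _ := by simp only [norm_mul]

lemma muHexa_lt_one_of_norm_le {A : Matrix (Fin 2) (Fin 2) ℂ}
    (h₀₀ : ‖A 0 0‖ ≤ 1 / 100) (h₁₀ : ‖A 1 0‖ ≤ 11 / 100) (h₁₁ : ‖A 1 1‖ ≤ 1 / 100)
    (hdet : ‖A.det‖ ≤ 21 / 100) : muHexa A < 1 := by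
  -- `r = 9 / 5` satisfies `13 / 100 * r + 21 / 100 * r ^ 2 < 1`.
  refine muHexa_lt_one_of_forall_le_opNorm2 (r := 9 / 5) (by norm_num) fun X hX hdetX => ?_
  by_contra! hsmall
  have hle : ∀ i j, ‖X i j‖ ≤ 9 / 5 := fun i j => (norm_apply_le_opNorm2 X i j).trans hsmall.le
  have hone := one_le_of_det_one_sub_mul_eq_zero hX hdetX
  have hbound : ‖A 0 0‖ * ‖X 0 0‖ + ‖A 1 0‖ * ‖X 0 1‖ + ‖A 1 1‖ * ‖X 1 1‖
      + ‖A.det‖ * (‖X 0 0‖ * ‖X 1 1‖)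
      ≤ 1 / 100 * (9 / 5) + 11 / 100 * (9 / 5) + 1 / 100 * (9 / 5)
        + 21 / 100 * (9 / 5 * (9 / 5)) := by
    gcongr <;> apply hle
  linarith

lemma norm_mul_sub_det_le_opNorm2_mul (A : Matrix (Fin 2) (Fin 2) ℂ) :
    ‖A 0 0 * A 1 1 - A.det‖ ≤ opNorm2 A * ‖A 1 0‖ := by
  rw [Matrix.det_fin_two, sub_sub_cancel, norm_mul]
  exact mul_le_mul_of_nonneg_right (norm_apply_le_opNorm2 A 0 1) (norm_nonneg _)

lemma exists_piMap_eq_s8 {q : ℂ × ℂ × ℂ × ℂ} (hq : q.1 ≠ 0) : ∃ A, piMap A = q := by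
  obtain ⟨a, x₁, x₂, x₃⟩ := q
  refine ⟨!![x₁, (x₁ * x₂ - x₃) / a; a, x₂], ?_⟩
  simp [piMap, Matrix.det_fin_two_of, div_mul_cancel₀ _ hq]

def hexCenter : ℂ × ℂ × ℂ × ℂ := (1 / 10, 0, 0, -(1 / 5))

lemma norm_bounds_of_mem_ball_hexCenter {q : ℂ × ℂ × ℂ × ℂ}
    (hq : q ∈ ball hexCenter (1 / 100)) :
    9 / 100 < ‖q.1‖ ∧ ‖q.1‖ < 11 / 100 ∧ ‖q.2.1‖ < 1 / 100 ∧ ‖q.2.2.1‖ < 1 / 100 ∧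
      19 / 100 < ‖q.2.2.2‖ ∧ ‖q.2.2.2‖ < 21 / 100 := by
  simp only [mem_ball, Prod.dist_eq, max_lt_iff, hexCenter] at hq
  obtain ⟨ha, hx₁, hx₂, hx₃⟩ := hq
  have ha' := (abs_norm_sub_norm_le q.1 (1 / 10)).trans_lt (dist_eq_norm q.1 _ ▸ ha)
  have hx₃' := (abs_norm_sub_norm_le q.2.2.2 (-(1 / 5))).trans_lt (dist_eq_norm q.2.2.2 _ ▸ hx₃)
  rw [dist_zero_right] at hx₁ hx₂
  norm_num [abs_lt] at ha' hx₃'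
  refine ⟨?_, ?_, hx₁, hx₂, ?_, ?_⟩ <;> linarith

lemma muHexa_lt_one_of_piMap_mem_ball {A : Matrix (Fin 2) (Fin 2) ℂ}
    (hA : piMap A ∈ ball hexCenter (1 / 100)) : muHexa A < 1 := by
  obtain ⟨-, ha, hx₁, hx₂, -, hx₃⟩ := norm_bounds_of_mem_ball_hexCenter hA
  exact muHexa_lt_one_of_norm_le hx₁.le ha.le hx₂.le hx₃.le

lemma one_le_opNorm2_of_piMap_mem_ball {A : Matrix (Fin 2) (Fin 2) ℂ}
    (hA : piMap A ∈ ball hexCenter (1 / 100)) : 1 ≤ opNorm2 A := by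
  obtain ⟨-, ha, hx₁, hx₂, hx₃, -⟩ := norm_bounds_of_mem_ball_hexCenter hA
  simp only [piMap] at ha hx₁ hx₂ hx₃
  by_contra! hlt
  have h := norm_mul_sub_det_le_opNorm2_mul A
  have h' := norm_sub_norm_le A.det (A 0 0 * A 1 1)
  rw [norm_sub_rev, norm_mul] at h'
  nlinarith [norm_nonneg (A 0 0), norm_nonneg (A 1 1), norm_nonneg (A 1 0)]

lemma ball_hexCenter_subset_hexMu_diff_hexN : ball hexCenter (1 / 100) ⊆ hexMu \ hexN := by
  intro q hq
  obtain ⟨A, rfl⟩ := exists_piMap_eq_s8 (norm_pos_iff.1 ((by norm_num : (0 : ℝ) < 9 / 100).trans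
    (norm_bounds_of_mem_ball_hexCenter hq).1))
  refine ⟨⟨A, muHexa_lt_one_of_piMap_mem_ball hq, rfl⟩, ?_⟩
  rintro ⟨B, hB, hBA⟩
  exact (hB.trans_le (one_le_opNorm2_of_piMap_mem_ball (hBA ▸ hq))).false

/-- `μ_hexa < ‖·‖` is possible with `a₂₁ ≠ 0`; `ℍ_N ⊆ ℍ_μ`;
`ℍ_μ \ ℍ_N` contains a nonempty open set; `ℍ_N ⊊ ℍ_μ`. -/
theorem stmt8 :
    (∃ A : Matrix (Fin 2) (Fin 2) ℂ,
      A 1 0 ≠ 0 ∧ muHexa A < ENNReal.ofReal (opNorm2 A)) ∧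
    hexN ⊆ hexMu ∧
    (∃ U : Set (ℂ × ℂ × ℂ × ℂ), IsOpen U ∧ U.Nonempty ∧ U ⊆ hexMu \ hexN) ∧
    hexN ⊂ hexMu := by
  have hcenter : hexCenter ∈ ball hexCenter (1 / 100) := mem_ball_self (by norm_num)
  set A : Matrix (Fin 2) (Fin 2) ℂ := !![0, 2; 1 / 10, 0]
  have hA : piMap A = hexCenter := by
    norm_num [A, piMap, hexCenter, Matrix.det_fin_two_of]
  refine ⟨⟨A, by simp [A], ?_⟩, hexN_subset_hexMu,
    ⟨_, isOpen_ball, ⟨_, hcenter⟩, ball_hexCenter_subset_hexMu_diff_hexN⟩,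
    (Set.ssubset_iff_of_subset hexN_subset_hexMu).2
      ⟨_, ball_hexCenter_subset_hexMu_diff_hexN hcenter⟩⟩
  have hAc : piMap A ∈ ball hexCenter (1 / 100) := by rw [hA]; exact hcenter
  calc muHexa A < 1 := muHexa_lt_one_of_piMap_mem_ball hAc
    _ ≤ ENNReal.ofReal (opNorm2 A) :=
      ENNReal.one_le_ofReal.2 (one_le_opNorm2_of_piMap_mem_ball hAc)
end
end
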